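/- arXiv:1712.01422 — 9 statements merged into one kernel-verified Lean document; each statement's English description precedes it below -/
import Mathlib

section
/- Let p be an odd prime, and let n, k be integers coprime to p. Then the sum over m from 1 to p-1 of the squared absolute value of the sum over a from 1 to p-1 of χ₀(m·a + n·ā)·e(k·a/p) equals 2p - 5, where χ₀ is the principal Dirichlet character mod p, ā denotes the multiplicative inverse of a mod p, and e(y) = e^{2πiy}. -/
/-! Work over a finite field `F` of odd order `q` with a nontrivial additive character `ψ`
(here `ψ a = e p (k a)`). For `m ≠ 0` the principal character `χ₀(m a + N a⁻¹)` is `1` except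
at the roots of `a² = -N/m`, so the inner sum is `-1 - T(-N/m)` with `T c = ∑_{a² = c} ψ a`.
The set of square roots is symmetric under `a ↦ -a`, so `T c` is real and
`|1 + T c|² = (1 + T c)²`. As `m` runs over `F^×` so does `c = -N/m`, and
`∑ T c = ∑_{a ≠ 0} ψ a = -1`, while in odd characteristic
`∑ T c² = ∑_{a ≠ 0} ψ a (ψ a + ψ (-a)) = ∑_{a ≠ 0} (ψ (2a) + 1) = q - 2`.
Altogether `(q - 1) - 2 + (q - 2) = 2q - 5`. -/

open Finset Complex

/-- `e p x = e^{2πi x/p}` for `x : ZMod p`, using the canonical representative. -/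
noncomputable def e (p : ℕ) [NeZero p] (x : ZMod p) : ℂ :=
  Complex.exp (2 * Real.pi * Complex.I * x.val / p)

lemma e_eq_stdAddChar (p : ℕ) [NeZero p] (x : ZMod p) : e p x = ZMod.stdAddChar x := by
  rw [ZMod.stdAddChar_apply, ZMod.toCircle_apply, e]

lemma AddChar.sum_filter_ne_zero_eq_neg_one {R : Type*} [AddGroup R] [Fintype R] [DecidableEq R]
    {ψ : AddChar R ℂ} (hψ : ψ ≠ 1) : ∑ a ∈ univ.filter (· ≠ 0), ψ a = -1 := by
  rw [filter_ne', sum_erase_eq_sub (mem_univ 0), AddChar.sum_eq_zero_of_ne_one hψ,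
    AddChar.map_zero_eq_one, zero_sub]

lemma ne_zero_and_mul_add_mul_inv_eq_zero_iff {F : Type*} [Field F] {m N a : F} (hm : m ≠ 0)
    (hN : N ≠ 0) :
    a ≠ 0 ∧ m * a + N * a⁻¹ = 0 ↔ a ^ 2 = -N / m := by
  constructor
  · rintro ⟨ha, h⟩
    rw [eq_div_iff hm]
    linear_combination a * h - N * mul_inv_cancel₀ ha
  · intro h
    have ha : a ≠ 0 := by rintro rfl; simp [hm, hN, eq_comm] at h
    refine ⟨ha, ?_⟩
    field_simp at h ⊢
    linear_combination h

section FiniteField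

variable {F : Type*} [Field F] [Fintype F] [DecidableEq F]

lemma sum_filter_ne_zero_comp_div {M : Type*} [AddCommMonoid M] {N : F} (hN : N ≠ 0)
    (g : F → M) : ∑ m ∈ univ.filter (· ≠ 0), g (N / m) = ∑ c ∈ univ.filter (· ≠ 0), g c := by
  refine sum_nbij' (N / ·) (N / ·) ?_ ?_ ?_ ?_ fun _ _ ↦ rfl <;>
    simp +contextual [hN, div_div_cancel₀]

lemma sum_filter_ne_zero_sum_filter_sq_eq {M : Type*} [AddCommMonoid M] (f : F → M) :
    ∑ c ∈ univ.filter (· ≠ 0), ∑ a ∈ univ.filter (· ^ 2 = c), f a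
      = ∑ a ∈ univ.filter (· ≠ 0), f a := by
  refine (sum_congr rfl fun c hc ↦ sum_congr ?_ fun _ _ ↦ rfl).trans
    (sum_fiberwise_of_maps_to (g := (· ^ 2)) (by simp) f)
  ext a
  simp only [mem_filter, mem_univ, true_and, ne_eq] at hc ⊢
  constructor
  · rintro rfl; exact ⟨by simpa using hc, rfl⟩
  · exact And.right

noncomputable def sqrtCharSum (ψ : AddChar F ℂ) (c : F) : ℂ :=
  ∑ a ∈ univ.filter (· ^ 2 = c), ψ a

variable {ψ : AddChar F ℂ}

lemma conj_sqrtCharSum (c : F) : starRingEnd ℂ (sqrtCharSum ψ c) = sqrtCharSum ψ c := by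
  rw [sqrtCharSum, map_sum]
  exact sum_equiv (Equiv.neg F) (by simp) fun a _ ↦ by simp [AddChar.map_neg_eq_conj]

lemma sqrtCharSum_sq_eq {a : F} (ha : a ≠ 0) (h2 : (2 : F) ≠ 0) :
    sqrtCharSum ψ (a ^ 2) = ψ a + ψ (-a) := by
  have hne : a ≠ -a := fun h ↦ mul_ne_zero h2 ha (by linear_combination h)
  have hroots : univ.filter (· ^ 2 = a ^ 2) = {a, -a} := by
    ext b; simp [sq_eq_sq_iff_eq_or_eq_neg]
  rw [sqrtCharSum, hroots, sum_pair hne]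

lemma sum_sqrtCharSum (hψ : ψ ≠ 1) : ∑ c ∈ univ.filter (· ≠ 0), sqrtCharSum ψ c = -1 := by
  simp only [sqrtCharSum]
  rw [sum_filter_ne_zero_sum_filter_sq_eq, AddChar.sum_filter_ne_zero_eq_neg_one hψ]

lemma sum_sqrtCharSum_sq (hψ : ψ ≠ 1) (h2 : (2 : F) ≠ 0) :
    ∑ c ∈ univ.filter (· ≠ 0), sqrtCharSum ψ c ^ 2 = Fintype.card F - 2 := by
  have hsq (c : F) : sqrtCharSum ψ c ^ 2
      = ∑ a ∈ univ.filter (· ^ 2 = c), ψ a * sqrtCharSum ψ (a ^ 2) := by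
    rw [sq]
    nth_rw 1 [sqrtCharSum]
    rw [sum_mul]
    exact sum_congr rfl fun a ha ↦ by rw [(mem_filter.mp ha).2]
  have hterm : ∀ a ∈ univ.filter (· ≠ (0 : F)),
      ψ a * sqrtCharSum ψ (a ^ 2) = ψ.mulShift 2 a + 1 := fun a ha ↦ by
    rw [sqrtCharSum_sq_eq (mem_filter.mp ha).2 h2, mul_add, ← AddChar.map_add_eq_mul,
      ← AddChar.map_add_eq_mul, add_neg_cancel, AddChar.map_zero_eq_one,
      AddChar.mulShift_apply, two_mul]
  have hψ2 : ψ.mulShift 2 ≠ 1 := AddChar.IsPrimitive.of_ne_one hψ h2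
  simp only [hsq]
  rw [sum_filter_ne_zero_sum_filter_sq_eq, sum_congr rfl hterm, sum_add_distrib,
    AddChar.sum_filter_ne_zero_eq_neg_one hψ2, sum_const, filter_ne',
    card_erase_of_mem (mem_univ _), card_univ, nsmul_one, Nat.cast_sub Fintype.card_pos]
  push_cast
  ring

lemma sum_trivialChar_mul_eq {m N : F} (hm : m ≠ 0) (hN : N ≠ 0) (hψ : ψ ≠ 1) :
    ∑ a ∈ univ.filter (· ≠ 0), (1 : MulChar F ℂ) (m * a + N * a⁻¹) * ψ a
      = -1 - sqrtCharSum ψ (-N / m) := by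
  have hterm : ∀ a ∈ univ.filter (· ≠ (0 : F)), (1 : MulChar F ℂ) (m * a + N * a⁻¹) * ψ a
      = ψ a - if m * a + N * a⁻¹ = 0 then ψ a else 0 := fun a _ ↦ by
    split_ifs with h
    · rw [h, MulChar.map_nonunit _ not_isUnit_zero, zero_mul, sub_self]
    · rw [MulChar.one_apply (isUnit_iff_ne_zero.mpr h), one_mul, sub_zero]
  rw [sum_congr rfl hterm, sum_sub_distrib, AddChar.sum_filter_ne_zero_eq_neg_one hψ,
    ← sum_filter, filter_filter, sqrtCharSum]
  simp only [ne_zero_and_mul_add_mul_inv_eq_zero_iff hm hN]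

theorem sum_norm_sq_sum_trivialChar_mul (hψ : ψ ≠ 1) (h2 : (2 : F) ≠ 0) {N : F} (hN : N ≠ 0) :
    ∑ m ∈ univ.filter (· ≠ 0),
      ‖∑ a ∈ univ.filter (· ≠ 0), (1 : MulChar F ℂ) (m * a + N * a⁻¹) * ψ a‖ ^ 2
      = 2 * Fintype.card F - 5 := by
  have hterm : ∀ m ∈ univ.filter (· ≠ (0 : F)),
      (‖∑ a ∈ univ.filter (· ≠ 0), (1 : MulChar F ℂ) (m * a + N * a⁻¹) * ψ a‖ : ℂ) ^ 2
        = (1 + sqrtCharSum ψ (-N / m)) ^ 2 := fun m hm ↦ by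
    rw [← mul_conj', sum_trivialChar_mul_eq (mem_filter.mp hm).2 hN hψ, map_sub, map_neg,
      map_one, conj_sqrtCharSum]
    ring
  apply ofReal_injective
  push_cast
  rw [sum_congr rfl hterm, sum_filter_ne_zero_comp_div (neg_ne_zero.mpr hN)
    (fun c ↦ (1 + sqrtCharSum ψ c) ^ 2)]
  simp only [add_sq, sum_add_distrib, ← mul_sum, sum_sqrtCharSum hψ, sum_sqrtCharSum_sq hψ h2]
  rw [sum_const, filter_ne', card_erase_of_mem (mem_univ _), card_univ, one_pow, nsmul_one,
    Nat.cast_sub Fintype.card_pos]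
  push_cast
  ring

end FiniteField

theorem stmt_0 (p : ℕ) [Fact p.Prime] (hp : Odd p) (n k : ℤ)
    (hn : IsCoprime n (p : ℤ)) (hk : IsCoprime k (p : ℤ)) :
    ∑ m ∈ univ.filter (fun m : ZMod p => m ≠ 0),
      (‖∑ a ∈ univ.filter (fun a : ZMod p => a ≠ 0),
        (1 : DirichletCharacter ℂ p) ((m : ZMod p) * a + (n : ZMod p) * a⁻¹)
          * e p ((k : ZMod p) * a)‖) ^ 2 = 2 * p - 5 := by
  have h2 : (2 : ZMod p) ≠ 0 := Ring.two_ne_zero <| by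
    rw [ZMod.ringChar_zmod_n]; rintro rfl; exact absurd hp (by decide)
  have hψ : ZMod.stdAddChar.mulShift (k : ZMod p) ≠ 1 :=
    ZMod.isPrimitive_stdAddChar p (ZMod.unitOfIsCoprime k hk).ne_zero
  have hN : (n : ZMod p) ≠ 0 := (ZMod.unitOfIsCoprime n hn).ne_zero
  have := sum_norm_sq_sum_trivialChar_mul hψ h2 hN
  simpa only [AddChar.mulShift_apply, ← e_eq_stdAddChar, ZMod.card] using this
end

section
/- Let p be an odd prime, χ a non-principal Dirichlet character mod p, and n, k integers coprime to p. Then ∑_{m=1}^{p-1} |∑_{a=1}^{p-1} χ(m·a + n·ā)·e(k·a/p)|² = p·(p - 3 - χ̄(-1)). -/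
/-!
The sum over `a` may run over all of `𝔽_q`, its term `a = 0` vanishing since `0⁻¹ = 0` and
`χ 0 = 0`. Expanding `|·|²` and summing over all `m` first, the factorisation
`m a + ν a⁻¹ = a (m + ν / a²)` reduces the inner sum to the correlation
`∑ₘ χ(m + ν / a²) χ̄(m + ν / b²)`, which is `q - 1` if `a² = b²` and `-1` otherwise (it is
`χ(-1)` times the Jacobi sum `J(χ, χ̄) = -χ(-1)`). What remains are the terms with
`a² = b²`, contributing `q (q - 1 - χ(-1))`, and a product of Gauss sums
`g(χ, ψ) g(χ̄, ψ̄) = q`. The term `m = 0` is another such product, and removing it gives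
`q (q - 3 - χ(-1))`.
-/

open Finset Complex

section

variable {F R : Type*} [Field F] [CommRing R] {χ : MulChar F R}

theorem MulChar.mul_inv_apply_self {a : F} (ha : a ≠ 0) : χ a * χ⁻¹ a = 1 := by
  rw [← MulChar.mul_apply, mul_inv_cancel, MulChar.one_apply ha.isUnit]

variable [Fintype F] [IsDomain R] {ψ : AddChar F R}

theorem sum_sum_mulChar_div_mul_addChar_sub (hχ : χ ≠ 1) (hψ : ψ.IsPrimitive) :
    ∑ a, ∑ b, χ (a / b) * ψ (a - b) = Fintype.card F := by
  rw [← gaussSum_mul_gaussSum_eq_card hχ hψ, gaussSum, gaussSum, Finset.sum_mul_sum]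
  refine Fintype.sum_congr _ _ fun a ↦ Fintype.sum_congr _ _ fun b ↦ ?_
  rw [div_eq_mul_inv, map_mul, ← MulChar.inv_apply', sub_eq_add_neg, AddChar.map_add_eq_mul,
    ← AddChar.inv_apply]
  ring

variable [DecidableEq F]

theorem MulChar.sum_shift_mul_inv_shift (hχ : χ ≠ 1) (α β : F) :
    ∑ m, χ (m + α) * χ⁻¹ (m + β) = if α = β then (Fintype.card F : R) - 1 else -1 := by
  split_ifs with hαβ
  · subst hαβ
    rw [Fintype.sum_equiv (Equiv.addRight α) (fun m ↦ χ (m + α) * χ⁻¹ (m + α)) ⇑(χ * χ⁻¹)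
      fun _ ↦ rfl, mul_inv_cancel, MulChar.sum_one_eq_card_units,
      Fintype.card_eq_card_units_add_one (α := F), Nat.cast_add, Nat.cast_one,
      add_sub_cancel_right]
  · have hc : α - β ≠ 0 := sub_ne_zero.mpr hαβ
    -- the substitution `m = (α - β) x - α` turns the sum into `χ⁻¹(-1) J(χ, χ⁻¹)`
    have hterm (x : F) : χ⁻¹ (-1) * (χ x * χ⁻¹ (1 - x)) =
        χ ((α - β) * x - α + α) * χ⁻¹ ((α - β) * x - α + β) := by
      rw [show (α - β) * x - α + α = (α - β) * x by ring,
        show (α - β) * x - α + β = (α - β) * (-1 * (1 - x)) by ring, map_mul, map_mul, map_mul]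
      linear_combination (-(χ x * χ⁻¹ (-1) * χ⁻¹ (1 - x))) * MulChar.mul_inv_apply_self (χ := χ) hc
    rw [← Fintype.sum_equiv ((Equiv.mulLeft₀ _ hc).trans (Equiv.subRight α)) _
      (fun m ↦ χ (m + α) * χ⁻¹ (m + β)) hterm, ← Finset.mul_sum, ← jacobiSum,
      jacobiSum_nontrivial_inv hχ, mul_neg, mul_comm,
      MulChar.mul_inv_apply_self (neg_ne_zero.mpr one_ne_zero)]

theorem MulChar.sum_mul_add_inv_mul_inv (hχ : χ ≠ 1) {ν : F} (hν : ν ≠ 0) (a b : F) :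
    ∑ m, χ (m * a + ν * a⁻¹) * χ⁻¹ (m * b + ν * b⁻¹)
      = χ (a / b) * ((if a ^ 2 = b ^ 2 then (Fintype.card F : R) else 0) - 1) := by
  rcases eq_or_ne a 0 with rfl | ha
  · simp
  rcases eq_or_ne b 0 with rfl | hb
  · simp
  have hfactor (c m : F) (hc : c ≠ 0) : m * c + ν * c⁻¹ = c * (m + ν / c ^ 2) := by
    field_simp
  have hsq : ν / a ^ 2 = ν / b ^ 2 ↔ a ^ 2 = b ^ 2 := by
    rw [div_eq_div_iff (pow_ne_zero 2 ha) (pow_ne_zero 2 hb), mul_comm ν, mul_comm ν,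
      mul_left_inj' hν, eq_comm]
  calc ∑ m, χ (m * a + ν * a⁻¹) * χ⁻¹ (m * b + ν * b⁻¹)
      = χ a * χ⁻¹ b * ∑ m, χ (m + ν / a ^ 2) * χ⁻¹ (m + ν / b ^ 2) := by
        simp only [hfactor _ _ ha, hfactor _ _ hb, map_mul, Finset.mul_sum]
        exact Fintype.sum_congr _ _ fun m ↦ by ring
    _ = _ := by
        rw [MulChar.sum_shift_mul_inv_shift hχ, if_congr hsq rfl rfl, div_eq_mul_inv, map_mul,
          MulChar.inv_apply']
        split_ifs <;> ring

theorem sum_sum_sq_eq_sq_mulChar_div_mul_addChar_sub (hF : ringChar F ≠ 2)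
    (hψ : ψ.IsPrimitive) :
    ∑ a, ∑ b, (if a ^ 2 = b ^ 2 then χ (a / b) * ψ (a - b) else 0)
      = Fintype.card F - 1 - χ (-1) := by
  have h2 : (2 : F) ≠ 0 := Ring.two_ne_zero hF
  have hrow (a : F) (ha : a ≠ 0) :
      ∑ b, (if a ^ 2 = b ^ 2 then χ (a / b) * ψ (a - b) else 0) = 1 + χ (-1) * ψ (a * 2) := by
    have hne : a ≠ -a := fun h ↦
      ha ((mul_eq_zero.mp (show 2 * a = 0 by linear_combination h)).resolve_left h2)
    have hsplit (b : F) : (if a ^ 2 = b ^ 2 then χ (a / b) * ψ (a - b) else 0)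
        = (if b = a then χ (a / b) * ψ (a - b) else 0)
          + (if b = -a then χ (a / b) * ψ (a - b) else 0) := by
      rcases eq_or_ne b a with rfl | hba
      · simp [hne]
      rcases eq_or_ne b (-a) with rfl | hba'
      · simp [hba]
      rw [if_neg (by rw [sq_eq_sq_iff_eq_or_eq_neg]; grind), if_neg hba, if_neg hba', add_zero]
    rw [Fintype.sum_congr _ _ hsplit, Finset.sum_add_distrib, Finset.sum_ite_eq',
      Finset.sum_ite_eq', if_pos (Finset.mem_univ _), if_pos (Finset.mem_univ _), div_self ha,
      div_neg, div_self ha, sub_self, sub_neg_eq_add, MulChar.map_one, AddChar.map_zero_eq_one,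
      mul_two, one_mul]
  have hrow0 : (fun a ↦ ∑ b, (if a ^ 2 = b ^ 2 then χ (a / b) * ψ (a - b) else 0)) 0 = 0 := by
    simp [MulChar.map_zero]
  have hsum : ∑ a ∈ univ.erase 0, ψ (a * 2) = -1 := by
    rw [Finset.sum_erase_eq_sub (Finset.mem_univ _), AddChar.sum_mulShift _ hψ, if_neg h2]
    simp
  rw [← Finset.sum_erase univ (a := (0 : F)) hrow0,
    Finset.sum_congr rfl fun a ha ↦ hrow a (Finset.ne_of_mem_erase ha),
    Finset.sum_add_distrib, ← Finset.mul_sum, hsum, Finset.sum_const,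
    Finset.card_erase_of_mem (Finset.mem_univ _), Finset.card_univ, nsmul_one,
    Nat.cast_sub Fintype.card_pos, Nat.cast_one]
  ring

end

section

variable {F : Type*} [Field F] [Fintype F] {χ : MulChar F ℂ} {ψ : AddChar F ℂ}

theorem sq_norm_sum_mulChar_mul_addChar (g : F → F) :
    (‖∑ a, χ (g a) * ψ a‖ : ℂ) ^ 2 = ∑ a, ∑ b, χ (g a) * χ⁻¹ (g b) * ψ (a - b) := by
  rw [← Complex.mul_conj', map_sum, Finset.sum_mul_sum]
  refine Fintype.sum_congr _ _ fun a ↦ Fintype.sum_congr _ _ fun b ↦ ?_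
  rw [map_mul, ← AddChar.map_neg_eq_conj, ← RCLike.star_def, MulChar.star_apply', sub_eq_add_neg,
    AddChar.map_add_eq_mul]
  ring

theorem sum_sq_norm_sum_mulChar_add_inv [DecidableEq F] (hF : ringChar F ≠ 2) (hχ : χ ≠ 1)
    (hψ : ψ ≠ 1) {ν : F} (hν : ν ≠ 0) :
    ((∑ m ∈ univ.filter (· ≠ 0),
        ‖∑ a ∈ univ.filter (· ≠ 0), χ (m * a + ν * a⁻¹) * ψ a‖ ^ 2 : ℝ) : ℂ)
      = Fintype.card F * (Fintype.card F - 3 - χ (-1)) := by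
  have hψ' := AddChar.IsPrimitive.of_ne_one hψ
  have hK (m : F) : ∑ a ∈ univ.erase 0, χ (m * a + ν * a⁻¹) * ψ a
      = ∑ a, χ (m * a + ν * a⁻¹) * ψ a :=
    Finset.sum_erase _ (by simp [MulChar.map_zero])
  have hall : ∑ m, (‖∑ a, χ (m * a + ν * a⁻¹) * ψ a‖ : ℂ) ^ 2
      = Fintype.card F * (Fintype.card F - 1 - χ (-1)) - Fintype.card F := by
    calc ∑ m, (‖∑ a, χ (m * a + ν * a⁻¹) * ψ a‖ : ℂ) ^ 2
        = ∑ a, ∑ b, (∑ m, χ (m * a + ν * a⁻¹) * χ⁻¹ (m * b + ν * b⁻¹)) * ψ (a - b) := by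
          simp only [sq_norm_sum_mulChar_mul_addChar, Finset.sum_mul]
          rw [Finset.sum_comm]
          exact Fintype.sum_congr _ _ fun a ↦ Finset.sum_comm
      _ = ∑ a, ∑ b,
            χ (a / b) * ((if a ^ 2 = b ^ 2 then (Fintype.card F : ℂ) else 0) - 1) * ψ (a - b) := by
          simp only [MulChar.sum_mul_add_inv_mul_inv hχ hν]
      _ = Fintype.card F * ∑ a, ∑ b, (if a ^ 2 = b ^ 2 then χ (a / b) * ψ (a - b) else 0)
          - ∑ a, ∑ b, χ (a / b) * ψ (a - b) := by
          simp only [Finset.mul_sum, ← Finset.sum_sub_distrib]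
          refine Fintype.sum_congr _ _ fun a ↦ Fintype.sum_congr _ _ fun b ↦ ?_
          split_ifs <;> ring
      _ = Fintype.card F * (Fintype.card F - 1 - χ (-1)) - Fintype.card F := by
          rw [sum_sum_sq_eq_sq_mulChar_div_mul_addChar_sub hF hψ',
            sum_sum_mulChar_div_mul_addChar_sub hχ hψ']
  have hzero : (‖∑ a, χ (0 * a + ν * a⁻¹) * ψ a‖ : ℂ) ^ 2 = Fintype.card F := by
    rw [sq_norm_sum_mulChar_mul_addChar,
      ← sum_sum_mulChar_div_mul_addChar_sub (inv_ne_one.mpr hχ) hψ']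
    refine Fintype.sum_congr _ _ fun a ↦ Fintype.sum_congr _ _ fun b ↦ ?_
    rw [zero_mul, zero_add, zero_mul, zero_add, MulChar.inv_apply', MulChar.inv_apply',
      ← map_mul]
    congr 2
    field_simp
  simp only [Finset.filter_ne', hK]
  push_cast
  rw [Finset.sum_erase_eq_sub (Finset.mem_univ _), hall, hzero]
  ring

end

theorem stmt_1 (p : ℕ) [Fact p.Prime] (hp : Odd p) (χ : DirichletCharacter ℂ p)
    (hχ : χ ≠ 1) (n k : ℤ) (hn : IsCoprime n (p : ℤ)) (hk : IsCoprime k (p : ℤ)) :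
    ∑ m ∈ univ.filter (fun m : ZMod p => m ≠ 0),
      (‖∑ a ∈ univ.filter (fun a : ZMod p => a ≠ 0),
        χ ((m : ZMod p) * a + (n : ZMod p) * a⁻¹) * e p ((k : ZMod p) * a)‖) ^ 2
      = p * (p - 3 - (starRingEnd ℂ) (χ (-1))) := by
  have hF : ringChar (ZMod p) ≠ 2 := by
    rw [ZMod.ringChar_zmod_n]
    rintro rfl
    exact Nat.not_odd_iff_even.mpr even_two hp
  have hψ : ZMod.stdAddChar.mulShift (k : ZMod p) ≠ 1 :=
    ZMod.isPrimitive_stdAddChar p (ZMod.unitOfIsCoprime k hk).ne_zero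
  have he (a : ZMod p) : e p (k * a) = ZMod.stdAddChar.mulShift (k : ZMod p) a := by
    rw [AddChar.mulShift_apply, ZMod.stdAddChar_apply, ZMod.toCircle_apply, e]
  have hconj : (starRingEnd ℂ) (χ (-1)) = χ (-1) := by
    rw [← RCLike.star_def, MulChar.star_apply', MulChar.inv_apply', inv_neg, inv_one]
  simp only [he, hconj]
  simpa [ZMod.card] using
    sum_sq_norm_sum_mulChar_add_inv hF hχ hψ (ZMod.unitOfIsCoprime n hn).ne_zero
end

section
/- Let p be an odd prime and χ a non-principal Dirichlet character mod p. Then ∑_{m=0}^{p-1} |∑_{a=1}^{p-1} χ(m·a + ā)·e(a/p)|² = p·(p - 2 - χ̄(-1)). -/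
/-!
Let `ψ` be a primitive additive character of a finite field of order `q`. Expanding the square
gives `∑_{a,b} ψ(a - b) ∑_m χ(ma + a⁻¹) χ̄(mb + b⁻¹)`. The substitution `u = ma + a⁻¹` turns the
inner sum into the correlation `∑_u χ(u) χ̄(αu + β)` with `α = b/a` and `β = b⁻¹ - b/a²`, which is
`χ̄(α) (q·[β = 0] - 1)`; and `β = 0` exactly when `b = ±a`. The `-1` part factors as the product
of the Gauss sums of `(χ, ψ)` and `(χ̄, ψ̄)`, i.e. `q`, while the diagonal `b = ±a` contributes
`q(q - 1) - q χ̄(-1)`, because `∑_{a ≠ 0} ψ(2a) = -1` in odd characteristic.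
-/

open Finset Complex

namespace MulChar

variable {F R : Type*} [Field F] [Fintype F] [CommRing R] [IsDomain R] {χ : MulChar F R}
  {ψ : AddChar F R}

lemma sum_sum_inv_apply_div_mul_addChar_sub (hχ : χ ≠ 1) (hψ : ψ.IsPrimitive) :
    ∑ a, ∑ b, χ⁻¹ (b / a) * ψ (a - b) = Fintype.card F := by
  rw [← gaussSum_mul_gaussSum_eq_card hχ hψ, gaussSum, gaussSum, sum_mul_sum]
  refine sum_congr rfl fun a _ => sum_congr rfl fun b _ => ?_
  rw [div_eq_mul_inv, map_mul, inv_apply' χ a⁻¹, inv_inv, sub_eq_add_neg, AddChar.map_add_eq_mul,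
    AddChar.inv_apply]
  ring

variable [DecidableEq F]

lemma sum_apply_add_mul (hχ : χ ≠ 1) (α β : F) :
    ∑ v, χ (α + β * v) = if β = 0 then Fintype.card F * χ α else 0 := by
  split_ifs with hβ
  · simp [hβ]
  · rw [← sum_eq_zero_of_ne_one hχ]
    exact Fintype.sum_bijective (fun v => α + β * v)
      ((add_right_injective α).comp (mul_right_injective₀ hβ)).bijective_of_finite _ _ fun _ => rfl

lemma sum_mul_inv_apply_mul_add (hχ : χ ≠ 1) (α β : F) :
    ∑ u, χ u * χ⁻¹ (α * u + β) = χ⁻¹ α * ((if β = 0 then Fintype.card F else 0) - 1) := by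
  have hterm (u : F) :
      χ u * χ⁻¹ (α * u + β) = χ⁻¹ (α + β * u⁻¹) - if u = 0 then χ⁻¹ α else 0 := by
    -- at `u = 0` both sides vanish, as `0⁻¹ = 0`
    rcases eq_or_ne u 0 with rfl | hu
    · simp
    · rw [if_neg hu, sub_zero, show α * u + β = u * (α + β * u⁻¹) by field_simp, map_mul,
        ← mul_assoc, inv_apply', ← map_mul, mul_inv_cancel₀ hu, map_one, one_mul, inv_apply']
  have hinv : ∑ u : F, χ⁻¹ (α + β * u⁻¹) = ∑ v, χ⁻¹ (α + β * v) :=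
    Fintype.sum_bijective _ inv_involutive.bijective _ _ fun _ => rfl
  rw [sum_congr rfl fun u _ => hterm u, sum_sub_distrib, hinv,
    sum_apply_add_mul (inv_ne_one.mpr hχ), sum_ite_eq' univ (0 : F)]
  simp only [mem_univ, if_true]
  split_ifs <;> ring

lemma sum_apply_mul_add_inv_mul_inv_apply (hχ : χ ≠ 1) (a b : F) :
    ∑ m, χ (m * a + a⁻¹) * χ⁻¹ (m * b + b⁻¹)
      = χ⁻¹ (b / a) * ((if b = a ∨ b = -a then Fintype.card F else 0) - 1) := by
  rcases eq_or_ne a 0 with rfl | ha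
  · simp
  rcases eq_or_ne b 0 with rfl | hb
  · simp
  have hshift : ∑ m, χ (m * a + a⁻¹) * χ⁻¹ (m * b + b⁻¹)
      = ∑ u, χ u * χ⁻¹ (b / a * u + (b⁻¹ - b / a ^ 2)) := by
    refine Fintype.sum_bijective (fun m => m * a + a⁻¹)
      ((add_left_injective _).comp (mul_left_injective₀ ha)).bijective_of_finite _ _ fun m => ?_
    congr 2
    field_simp
    ring
  have hβ : b⁻¹ - b / a ^ 2 = 0 ↔ b = a ∨ b = -a := by
    rw [sub_eq_zero, eq_div_iff (pow_ne_zero 2 ha), inv_mul_eq_iff_eq_mul₀ hb, ← sq,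
      eq_comm, sq_eq_sq_iff_eq_or_eq_neg]
  rw [hshift, sum_mul_inv_apply_mul_add hχ]
  simp only [hβ]

lemma sum_sum_ite_eq_or_eq_neg (hF : ringChar F ≠ 2) (hψ : ψ.IsPrimitive) :
    ∑ a, ∑ b, (if b = a ∨ b = -a then χ⁻¹ (b / a) * ψ (a - b) else 0)
      = Fintype.card F - 1 - χ⁻¹ (-1) := by
  have h2 : (2 : F) ≠ 0 := Ring.two_ne_zero hF
  have hinner (a : F) : ∑ b, (if b = a ∨ b = -a then χ⁻¹ (b / a) * ψ (a - b) else 0)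
      = (1 + χ⁻¹ (-1) * ψ (a * 2)) - if a = 0 then 1 + χ⁻¹ (-1) else 0 := by
    rcases eq_or_ne a 0 with rfl | ha
    · simp
    have hpair : univ.filter (fun b => b = a ∨ b = -a) = {a, -a} := by
      ext; simp
    have hne : a ≠ -a := fun h => mul_ne_zero ha h2 (by linear_combination h)
    rw [← sum_filter, hpair, sum_pair hne, if_neg ha, sub_zero, div_self ha, neg_div, div_self ha,
      sub_self, sub_neg_eq_add, ← mul_two, map_one, AddChar.map_zero_eq_one, mul_one]
  rw [sum_congr rfl fun a _ => hinner a, sum_sub_distrib, sum_add_distrib, ← mul_sum,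
    AddChar.sum_mulShift _ hψ, if_neg h2, sum_ite_eq' univ (0 : F)]
  simp only [mem_univ, if_true, sum_const, card_univ, nsmul_one]
  ring

end MulChar

open MulChar in
theorem sum_norm_sq_sum_mulChar_mul_add_inv_mul_addChar {F : Type*} [Field F] [Fintype F]
    [DecidableEq F] (hF : ringChar F ≠ 2) {χ : MulChar F ℂ} (hχ : χ ≠ 1) {ψ : AddChar F ℂ}
    (hψ : ψ.IsPrimitive) :
    ∑ m : F, ‖∑ a ∈ univ.filter (fun a : F => a ≠ 0), χ (m * a + a⁻¹) * ψ a‖ ^ 2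
      = (Fintype.card F : ℂ) * (Fintype.card F - 2 - starRingEnd ℂ (χ (-1))) := by
  have hdrop (m : F) : ∑ a ∈ univ.filter (fun a : F => a ≠ 0), χ (m * a + a⁻¹) * ψ a
      = ∑ a, χ (m * a + a⁻¹) * ψ a :=
    -- the `a = 0` term is `χ 0 * ψ 0 = 0`, as `0⁻¹ = 0`
    sum_filter_of_ne fun a _ h => by rintro rfl; simp at h
  have hsplit (a b : F) :
      χ⁻¹ (b / a) * ((if b = a ∨ b = -a then Fintype.card F else 0 : ℕ) - 1 : ℂ) * ψ (a - b)
        = Fintype.card F * (if b = a ∨ b = -a then χ⁻¹ (b / a) * ψ (a - b) else 0)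
          - χ⁻¹ (b / a) * ψ (a - b) := by
    split_ifs <;> push_cast <;> ring
  push_cast
  calc ∑ m : F, (‖∑ a ∈ univ.filter (fun a : F => a ≠ 0), χ (m * a + a⁻¹) * ψ a‖ : ℂ) ^ 2
      = ∑ m, ∑ a, ∑ b, χ (m * a + a⁻¹) * χ⁻¹ (m * b + b⁻¹) * ψ (a - b) := by
        refine sum_congr rfl fun m _ => ?_
        rw [hdrop, ← mul_conj', map_sum, sum_mul_sum]
        refine sum_congr rfl fun a _ => sum_congr rfl fun b _ => ?_
        rw [map_mul, starRingEnd_apply, star_apply', ← AddChar.map_neg_eq_conj, sub_eq_add_neg,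
          AddChar.map_add_eq_mul]
        ring
    _ = ∑ a, ∑ b, χ⁻¹ (b / a) * ((if b = a ∨ b = -a then Fintype.card F else 0 : ℕ) - 1 : ℂ)
          * ψ (a - b) := by
        rw [sum_comm]
        refine sum_congr rfl fun a _ => ?_
        rw [sum_comm]
        refine sum_congr rfl fun b _ => ?_
        rw [← sum_mul, sum_apply_mul_add_inv_mul_inv_apply hχ]
    _ = Fintype.card F * (Fintype.card F - 1 - χ⁻¹ (-1)) - Fintype.card F := by
        simp only [hsplit, sum_sub_distrib, ← mul_sum, sum_sum_ite_eq_or_eq_neg hF hψ,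
          sum_sum_inv_apply_div_mul_addChar_sub hχ hψ]
    _ = Fintype.card F * (Fintype.card F - 2 - starRingEnd ℂ (χ (-1))) := by
        rw [starRingEnd_apply, star_apply']
        ring

theorem stmt_3 (p : ℕ) [Fact p.Prime] (hp : Odd p) (χ : DirichletCharacter ℂ p)
    (hχ : χ ≠ 1) :
    ∑ m : ZMod p,
      ‖∑ a ∈ univ.filter (fun a : ZMod p => a ≠ 0),
        χ (m * a + a⁻¹) * e p a‖ ^ 2
      = p * (p - 2 - (starRingEnd ℂ) (χ (-1))) := by
  have hchar : ringChar (ZMod p) ≠ 2 := by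
    rw [ZMod.ringChar_zmod_n]
    rintro rfl
    exact absurd hp (by decide)
  simp only [e_eq_stdAddChar]
  simpa only [ZMod.card] using
    sum_norm_sq_sum_mulChar_mul_add_inv_mul_addChar hchar hχ (ZMod.isPrimitive_stdAddChar p)
end

section
/- Let p > 3 be a prime. Then ∑_{ψ mod p} |∑_{u=1}^{p-1} ∑_{a=1}^{p-1} ψ̄(u·a - 1)·ψ(u·ā - 1)·ψ²(a - 1)|² = (p-1)(p³ - 8p² + 29p - 53), where the outer sum is over all Dirichlet characters ψ mod p. -/
/-!
Since `conj (ψ x) = ψ x⁻¹`, each summand is `ψ (g u a)` with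
`g u a = (u a⁻¹ - 1) (a - 1)² / (u a - 1)`, so the inner sum is `∑ₜ N(t) ψ(t)` where `N(t)` counts
the pairs `(u, a)` of nonzero residues with `g u a = t`, and orthogonality of characters turns the
left-hand side into `(p - 1) ∑_{t ≠ 0} N(t)²`.

For `a ∉ {0, 1, -1}` and `t ≠ 0` the equation `g u a = t` is linear in `u` and has a single nonzero
solution unless `(a - 1)² = t` or `(a⁻¹ - 1)² = t`; moreover `g u 1 = 0`, and `g u (-1) = 4` for
`u ≠ -1`. Since `a ↦ a⁻¹` permutes `{0, 1, -1}ᶜ`, this gives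
`N(t) = p - 3 - 2 r(t) + [t = 4] (p - 2)` with `r(t) = #{a ∉ {0, 1, -1} | (a - 1)² = t}`.
Finally `∑ r = p - 3`, `r(4) = 1`, and, because `(c - 1)² = (a - 1)²` iff `c = a` or `c = 2 - a`,
`∑ r² = (p - 3) + (p - 5)`.
-/

open Finset Complex

namespace DirichletCharacter

lemma star_apply_of_isUnit {n : ℕ} (χ : DirichletCharacter ℂ n) {s : ZMod n} (hs : IsUnit s) :
    star (χ s) = χ s⁻¹ := by
  obtain ⟨v, rfl⟩ := hs
  rw [MulChar.star_apply', MulChar.inv_apply, Ring.inverse_unit, ZMod.inv_coe_unit]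

variable {n : ℕ} [NeZero n]

lemma sum_apply_mul_star_apply (t s : ZMod n) :
    ∑ χ : DirichletCharacter ℂ n, χ t * star (χ s) =
      if s = t ∧ IsUnit s then (n.totient : ℂ) else 0 := by
  by_cases hs : IsUnit s
  · simp only [hs, and_true, ← sum_char_inv_mul_char_eq ℂ hs t]
    exact sum_congr rfl fun χ _ => by rw [star_apply_of_isUnit χ hs, mul_comm]
  · simp [MulChar.map_nonunit _ hs, hs]

theorem sum_norm_sum_mul_apply_sq (c : ZMod n → ℂ) :
    ∑ χ : DirichletCharacter ℂ n, ‖∑ t, c t * χ t‖ ^ 2 =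
      n.totient * ∑ t ∈ univ.filter IsUnit, ‖c t‖ ^ 2 := by
  apply Complex.ofReal_injective
  push_cast
  simp_rw [← mul_conj', map_sum, sum_mul_sum, map_mul, mul_sum]
  rw [sum_comm]
  refine (sum_congr rfl fun t _ => sum_comm).trans ?_
  simp_rw [mul_mul_mul_comm (c _), ← mul_sum, ← RCLike.star_def, sum_apply_mul_star_apply]
  simp only [RCLike.star_def, ite_and, mul_ite, mul_zero, sum_ite_eq', mem_univ, ↓reduceIte,
    sum_filter, mul_sum]
  exact sum_congr rfl fun x _ => by rw [mul_comm]

end DirichletCharacter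

theorem Finset.sum_card_fiberwise_sq {ι κ : Type*} [DecidableEq κ] {s : Finset ι} {t : Finset κ}
    {f : ι → κ} (H : ∀ i ∈ s, f i ∈ t) :
    ∑ b ∈ t, #{i ∈ s | f i = b} ^ 2 = ∑ i ∈ s, #{j ∈ s | f j = f i} := by
  rw [← sum_fiberwise_of_maps_to H]
  refine sum_congr rfl fun b _ => ?_
  rw [sum_congr rfl fun i hi => by rw [(mem_filter.1 hi).2], sum_const, smul_eq_mul, sq]

section Field

variable {F : Type*} [Field F]

/-- The junk value `0⁻¹ = 0` is harmless: where `u a = 1` the summand of the theorem vanishes too,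
since characters vanish at `0`. -/
def summandArg (u a : F) : F := (u * a⁻¹ - 1) * (a - 1) ^ 2 * (u * a - 1)⁻¹

lemma MulChar.star_mul_mul_sq_eq_apply_summandArg [Finite F] (ψ : MulChar F ℂ) (u a : F) :
    starRingEnd ℂ (ψ (u * a - 1)) * ψ (u * a⁻¹ - 1) * ψ (a - 1) ^ 2 = ψ (summandArg u a) := by
  rw [starRingEnd_apply, MulChar.star_apply', MulChar.inv_apply', summandArg]
  simp only [map_mul, map_pow]
  ring

lemma summandArg_eq_iff {u a t : F} (ha : a ≠ 0) (ha2 : a ^ 2 ≠ 1) (ht : t ≠ 0) :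
    summandArg u a = t ↔ u * ((a - 1) ^ 2 - t * a ^ 2) = a * ((a - 1) ^ 2 - t) := by
  constructor
  · intro h
    have hua : u * a - 1 ≠ 0 := fun h' => ht (by rw [← h, summandArg, h', inv_zero, mul_zero])
    rw [summandArg] at h
    field_simp at h
    linear_combination h
  · intro h
    have ha1 : a - 1 ≠ 0 := sub_ne_zero.2 fun h => ha2 (by simp [h])
    have hua : u * a - 1 ≠ 0 := by
      intro h'
      have : (a - 1) ^ 2 * (a ^ 2 - 1) = 0 := by
        linear_combination (-a) * h + ((a - 1) ^ 2 - t * a ^ 2) * h'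
      exact mul_ne_zero (pow_ne_zero 2 ha1) (sub_ne_zero.2 ha2) this
    rw [summandArg]
    field_simp
    linear_combination h

lemma summandArg_one_right (u : F) : summandArg u 1 = 0 := by simp [summandArg]

lemma summandArg_neg_one_right {u : F} (hu : u ≠ -1) : summandArg u (-1) = 4 := by
  have : u * -1 - 1 ≠ 0 := fun h => hu (by linear_combination -h)
  rw [summandArg, inv_neg, inv_one, mul_right_comm, mul_inv_cancel₀ this]
  norm_num

lemma summandArg_neg_one_neg_one : summandArg (-1 : F) (-1) = 0 := by simp [summandArg]

lemma four_ne_zero_of_two_ne_zero (h2 : (2 : F) ≠ 0) : (4 : F) ≠ 0 := by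
  rw [show (4 : F) = 2 * 2 by norm_num]
  exact mul_ne_zero h2 h2

lemma sub_one_sq_eq_sub_one_sq_iff {a c : F} :
    (c - 1) ^ 2 = (a - 1) ^ 2 ↔ c = a ∨ c = 2 - a := by
  rw [sq_eq_sq_iff_eq_or_eq_neg, sub_left_inj]
  exact or_congr_right ⟨fun h => by linear_combination h, fun h => by linear_combination h⟩

end Field

section FiniteField

variable {F : Type*} [Field F] [Fintype F] [DecidableEq F]

lemma card_filter_ne_zero : (#{u : F | u ≠ 0} : ℤ) = Fintype.card F - 1 := by
  have h := card_erase_add_one (mem_univ (0 : F))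
  rw [card_univ] at h
  rw [filter_ne']
  omega

lemma card_filter_ne_zero_mul_eq {D c : F} (h : D ≠ 0 ∨ c ≠ 0) :
    (#{u : F | u ≠ 0 ∧ u * D = c} : ℤ) =
      1 - (if D = 0 then 1 else 0) - (if c = 0 then 1 else 0) := by
  rcases eq_or_ne D 0 with rfl | hD
  · have hc : c ≠ 0 := h.resolve_left (not_not.2 rfl)
    simp [hc, hc.symm]
  · have : ({u : F | u ≠ 0 ∧ u * D = c} : Finset F) = if c = 0 then ∅ else {c / D} := by
      ext u
      split_ifs with hc
      · simp [hc, hD]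
      · simp only [mem_filter, mem_univ, true_and, mem_singleton, eq_div_iff hD]
        exact ⟨fun h => h.2, fun h => ⟨by rintro rfl; simp [← h] at hc, h⟩⟩
    split_ifs <;> simp_all

def summandArgCount (t : F) : ℕ :=
  #{x ∈ univ.filter (fun u : F => u ≠ 0) ×ˢ univ.filter (fun a : F => a ≠ 0) |
    summandArg x.1 x.2 = t}

lemma sum_sum_apply_summandArg {R : Type*} [CommSemiring R] (f : F → R) :
    ∑ u ∈ univ.filter (fun u : F => u ≠ 0), ∑ a ∈ univ.filter (fun a : F => a ≠ 0),
      f (summandArg u a) = ∑ t, summandArgCount t * f t := by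
  rw [← sum_product' (f := fun u a => f (summandArg u a)),
    ← sum_fiberwise (g := fun x => summandArg x.1 x.2)]
  refine sum_congr rfl fun t _ => ?_
  rw [summandArgCount, sum_congr rfl fun x hx => by rw [(mem_filter.1 hx).2], sum_const,
    nsmul_eq_mul]

def admissible : Finset F := ({0, 1, -1} : Finset F)ᶜ

lemma mem_admissible {a : F} : a ∈ admissible ↔ a ≠ 0 ∧ a ≠ 1 ∧ a ≠ -1 := by
  simp [admissible]

lemma card_admissible (h2 : (2 : F) ≠ 0) :
    (#(admissible : Finset F) : ℤ) = Fintype.card F - 3 := by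
  have hcard : #({0, 1, -1} : Finset F) = 3 := by
    rw [card_insert_of_notMem (by simp), card_pair fun h => h2 (by linear_combination h)]
  have h := card_add_card_compl ({0, 1, -1} : Finset F)
  rw [admissible]
  omega

lemma card_summandArg_fiber_of_mem_admissible {a t : F} (ha : a ∈ admissible) (ht : t ≠ 0) :
    (#{u : F | u ≠ 0 ∧ summandArg u a = t} : ℤ) =
      1 - (if (a⁻¹ - 1) ^ 2 = t then 1 else 0) - (if (a - 1) ^ 2 = t then 1 else 0) := by
  obtain ⟨ha0, ha1, ham⟩ := mem_admissible.1 ha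
  have ha2 : a ^ 2 ≠ 1 := by simp [sq_eq_one_iff, ha1, ham]
  have hinv : (a⁻¹ - 1) ^ 2 = t ↔ (a - 1) ^ 2 - t * a ^ 2 = 0 := by
    have : (a⁻¹ - 1) ^ 2 * a ^ 2 = (a - 1) ^ 2 := by field_simp; ring
    rw [sub_eq_zero, ← this, mul_left_inj' (pow_ne_zero 2 ha0)]
  have hsq : (a - 1) ^ 2 = t ↔ a * ((a - 1) ^ 2 - t) = 0 := by simp [ha0, sub_eq_zero]
  have hnd : (a - 1) ^ 2 - t * a ^ 2 ≠ 0 ∨ a * ((a - 1) ^ 2 - t) ≠ 0 := by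
    by_contra! h
    have hE : (a - 1) ^ 2 - t = 0 := (mul_eq_zero.1 h.2).resolve_left ha0
    exact ha2 (mul_left_cancel₀ ht (by linear_combination hE - h.1))
  rw [filter_congr fun u _ => and_congr_right' (summandArg_eq_iff ha0 ha2 ht),
    card_filter_ne_zero_mul_eq hnd]
  simp only [hinv, hsq]

lemma card_summandArg_fiber_one {t : F} (ht : t ≠ 0) :
    #{u : F | u ≠ 0 ∧ summandArg u 1 = t} = 0 := by
  simp [summandArg_one_right, ht.symm]

lemma card_summandArg_fiber_neg_one {t : F} (ht : t ≠ 0) :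
    (#{u : F | u ≠ 0 ∧ summandArg u (-1) = t} : ℤ) =
      if t = 4 then (Fintype.card F : ℤ) - 2 else 0 := by
  have hfib : ∀ u : F, u ≠ 0 ∧ summandArg u (-1) = t ↔ u ≠ 0 ∧ u ≠ -1 ∧ t = 4 := by
    intro u
    rcases eq_or_ne u (-1) with rfl | hu
    · simp [summandArg_neg_one_neg_one, ht.symm]
    · simp [summandArg_neg_one_right hu, hu, eq_comm]
  rw [filter_congr fun u _ => hfib u]
  split_ifs with h4
  · have hcard : #({0, -1} : Finset F) = 2 := card_pair (by simp)
    have h := card_add_card_compl ({0, -1} : Finset F)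
    have : ({u : F | u ≠ 0 ∧ u ≠ -1 ∧ t = 4} : Finset F) = ({0, -1} : Finset F)ᶜ := by
      ext u; simp [h4]
    rw [this]
    omega
  · simp [h4]

lemma inv_mem_admissible {a : F} (ha : a ∈ admissible) : a⁻¹ ∈ admissible := by
  obtain ⟨h0, h1, hm⟩ := mem_admissible.1 ha
  refine mem_admissible.2 ⟨inv_ne_zero h0, by rwa [Ne, inv_eq_one], ?_⟩
  rwa [Ne, inv_eq_iff_eq_inv, inv_neg, inv_one]

def shiftSqCount (t : F) : ℕ := #{a ∈ admissible | (a - 1) ^ 2 = t}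

lemma card_filter_inv_sub_one_sq_eq_shiftSqCount (t : F) :
    #{a ∈ admissible | (a⁻¹ - 1) ^ 2 = t} = shiftSqCount t := by
  refine card_nbij' (·⁻¹) (·⁻¹) (fun a ha => ?_) (fun a ha => ?_)
    (fun a _ => inv_inv a) (fun a _ => inv_inv a) <;>
  simp only [coe_filter, Set.mem_ofPred_eq, inv_inv] at ha ⊢ <;>
  exact ⟨inv_mem_admissible ha.1, ha.2⟩

lemma summandArgCount_eq (h2 : (2 : F) ≠ 0) {t : F} (ht : t ≠ 0) :
    (summandArgCount t : ℤ) = Fintype.card F - 3 - 2 * shiftSqCount t +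
      if t = 4 then (Fintype.card F : ℤ) - 2 else 0 := by
  have hsub : ({1, -1} : Finset F) ⊆ univ.filter (· ≠ 0) := by
    simp [insert_subset_iff]
  have hadm : univ.filter (· ≠ 0) \ {1, -1} = (admissible : Finset F) := by
    ext a; simp [mem_admissible]
  rw [summandArgCount, card_filter, sum_product_right, ← sum_sdiff hsub,
    sum_pair fun h => h2 (by linear_combination h), hadm]
  simp only [← card_filter, filter_filter]
  push_cast
  rw [sum_congr rfl fun a ha => card_summandArg_fiber_of_mem_admissible ha ht,
    card_summandArg_fiber_one ht, card_summandArg_fiber_neg_one ht]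
  simp only [sum_sub_distrib, sum_const, sum_boole, card_filter_inv_sub_one_sq_eq_shiftSqCount,
    shiftSqCount, nsmul_eq_mul, mul_one, card_admissible h2]
  push_cast
  ring

lemma sub_one_sq_ne_zero_of_mem_admissible {a : F} (ha : a ∈ admissible) : (a - 1) ^ 2 ≠ 0 :=
  pow_ne_zero 2 (sub_ne_zero.2 (mem_admissible.1 ha).2.1)

lemma sum_shiftSqCount :
    ∑ t ∈ univ.filter (fun t : F => t ≠ 0), shiftSqCount t = #(admissible : Finset F) :=
  (card_eq_sum_card_fiberwise (f := fun a => (a - 1) ^ 2) fun _ ha =>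
    mem_filter.2 ⟨mem_univ _, sub_one_sq_ne_zero_of_mem_admissible ha⟩).symm

lemma card_filter_sub_one_sq_eq (h2 : (2 : F) ≠ 0) {a : F} (ha : a ∈ admissible) :
    #{c ∈ admissible | (c - 1) ^ 2 = (a - 1) ^ 2} = 1 + if 2 - a ∈ admissible then 1 else 0 := by
  have hne : a ≠ 2 - a := fun h =>
    (mem_admissible.1 ha).2.1 (mul_left_cancel₀ h2 (by linear_combination h))
  rw [filter_congr fun c _ => sub_one_sq_eq_sub_one_sq_iff, filter_or,
    card_union_of_disjoint (disjoint_filter.2 fun c _ h h' => hne (h.symm.trans h')),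
    filter_eq', filter_eq', if_pos ha]
  split_ifs <;> simp

lemma card_filter_two_sub_mem (h2 : (2 : F) ≠ 0) (h3 : (3 : F) ≠ 0) :
    (#{a ∈ (admissible : Finset F) | 2 - a ∈ admissible} : ℤ) = Fintype.card F - 5 := by
  have hsub : ({2, 3} : Finset F) ⊆ admissible := by
    simp only [insert_subset_iff, singleton_subset_iff, mem_admissible]
    refine ⟨⟨h2, fun h => one_ne_zero (by linear_combination h),
      fun h => h3 (by linear_combination h)⟩,
      h3, fun h => h2 (by linear_combination h),
      fun h => four_ne_zero_of_two_ne_zero h2 (by linear_combination h)⟩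
  have : ({a ∈ admissible | 2 - a ∈ admissible} : Finset F) = admissible \ {2, 3} := by
    ext a
    simp only [mem_filter, mem_sdiff, mem_admissible, mem_insert, mem_singleton]
    grind
  have h := card_sdiff_add_card_eq_card hsub
  rw [card_pair fun h => one_ne_zero (by linear_combination -h)] at h
  rw [this]
  linarith [card_admissible h2]

lemma sum_shiftSqCount_sq (h2 : (2 : F) ≠ 0) (h3 : (3 : F) ≠ 0) :
    ∑ t ∈ univ.filter (fun t : F => t ≠ 0), (shiftSqCount t : ℤ) ^ 2 =
      2 * Fintype.card F - 8 := by
  have h := sum_card_fiberwise_sq (t := univ.filter (fun t : F => t ≠ 0))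
    (f := fun a => (a - 1) ^ 2) fun _ ha =>
      mem_filter.2 ⟨mem_univ _, sub_one_sq_ne_zero_of_mem_admissible ha⟩
  rw [sum_congr rfl fun a ha => card_filter_sub_one_sq_eq h2 ha, sum_add_distrib, sum_const,
    sum_boole, smul_eq_mul, mul_one, Nat.cast_id] at h
  have hZ := congrArg (Nat.cast : ℕ → ℤ) h
  push_cast at hZ
  simp only [shiftSqCount, hZ, card_admissible h2, card_filter_two_sub_mem h2 h3]
  ring

lemma shiftSqCount_four (h2 : (2 : F) ≠ 0) (h3 : (3 : F) ≠ 0) : shiftSqCount (4 : F) = 1 := by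
  have h3adm : (3 : F) ∈ admissible := mem_admissible.2 ⟨h3, fun h => h2 (by linear_combination h),
    fun h => four_ne_zero_of_two_ne_zero h2 (by linear_combination h)⟩
  rw [shiftSqCount, card_eq_one]
  refine ⟨3, ext fun a => ?_⟩
  rw [mem_filter, mem_singleton, show (4 : F) = (3 - 1) ^ 2 by norm_num,
    sub_one_sq_eq_sub_one_sq_iff]
  constructor
  · rintro ⟨ha, h | h⟩
    · exact h
    · exact absurd (by linear_combination h) (mem_admissible.1 ha).2.2
  · rintro rfl
    exact ⟨h3adm, Or.inl rfl⟩

theorem sum_summandArgCount_sq (h2 : (2 : F) ≠ 0) (h3 : (3 : F) ≠ 0) :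
    ∑ t ∈ univ.filter (fun t : F => t ≠ 0), (summandArgCount t : ℤ) ^ 2 =
      (Fintype.card F : ℤ) ^ 3 - 8 * Fintype.card F ^ 2 + 29 * Fintype.card F - 53 := by
  set q : ℤ := (Fintype.card F : ℤ)
  have h4 : (4 : F) ∈ univ.filter (fun t : F => t ≠ 0) :=
    mem_filter.2 ⟨mem_univ _, four_ne_zero_of_two_ne_zero h2⟩
  have hsq : ∀ t : F, ((q - 3 - 2 * shiftSqCount t + if t = 4 then q - 2 else 0) : ℤ) ^ 2 =
      (q - 3) ^ 2 - 4 * (q - 3) * shiftSqCount t + 4 * (shiftSqCount t : ℤ) ^ 2 +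
        if t = 4 then (q - 2) * (3 * q - 8 - 4 * shiftSqCount (4 : F)) else 0 := by
    intro t
    split_ifs with h
    · subst h; ring
    · ring
  rw [sum_congr rfl fun t ht => by rw [summandArgCount_eq h2 (mem_filter.1 ht).2, hsq]]
  simp only [sum_add_distrib, sum_sub_distrib, ← mul_sum, sum_ite_eq', if_pos h4, sum_const,
    nsmul_eq_mul, card_filter_ne_zero, ← Nat.cast_sum, sum_shiftSqCount, card_admissible h2,
    sum_shiftSqCount_sq h2 h3, shiftSqCount_four h2 h3]
  ring

end FiniteField

lemma ZMod.natCast_ne_zero_of_lt {n p : ℕ} (h0 : 0 < n) (h : n < p) : (n : ZMod p) ≠ 0 := by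
  rw [Ne, ZMod.natCast_eq_zero_iff]
  exact fun hd => absurd (Nat.le_of_dvd h0 hd) (by omega)

theorem stmt_4 (p : ℕ) [Fact p.Prime] (hp : 3 < p) :
    ∑ ψ : DirichletCharacter ℂ p,
      (‖∑ u ∈ univ.filter (fun u : ZMod p => u ≠ 0),
        ∑ a ∈ univ.filter (fun a : ZMod p => a ≠ 0),
          (starRingEnd ℂ) (ψ (u * a - 1)) * ψ (u * a⁻¹ - 1) * ψ (a - 1) ^ 2‖) ^ 2
      = (p - 1) * (p ^ 3 - 8 * p ^ 2 + 29 * p - 53) := by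
  have h2 : (2 : ZMod p) ≠ 0 := by exact_mod_cast ZMod.natCast_ne_zero_of_lt two_pos (by omega)
  have h3 : (3 : ZMod p) ≠ 0 := by exact_mod_cast ZMod.natCast_ne_zero_of_lt three_pos hp
  have hcount := sum_summandArgCount_sq h2 h3
  rw [ZMod.card] at hcount
  simp only [MulChar.star_mul_mul_sq_eq_apply_summandArg, sum_sum_apply_summandArg,
    DirichletCharacter.sum_norm_sum_mul_apply_sq, isUnit_iff_ne_zero, Complex.norm_natCast,
    Nat.totient_prime Fact.out]
  rw [Nat.cast_sub (Fact.out : p.Prime).one_le]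
  exact_mod_cast congrArg (fun z : ℤ => ((p : ℤ) - 1) * z) hcount
end

section
/- Let p be an odd prime. Then ∑_{a=1}^{p-1} ((a-1)(ā-1) | p) = -((-1) | p), where (· | p) denotes the Legendre symbol and ā is the inverse of a mod p. -/
open Finset

theorem stmt_6 (p : ℕ) [Fact p.Prime] (hp : Odd p) :
    ∑ a ∈ univ.filter (fun a : ZMod p => a ≠ 0),
      legendreSym p (((a - 1) * (a⁻¹ - 1) : ZMod p).val : ℤ)
      = - legendreSym p (-1) := by
  classical
  have hchar : ringChar (ZMod p) ≠ 2 := by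
    rw [ZMod.ringChar_zmod_n]
    rintro rfl
    simp [Nat.odd_iff] at hp
  set χ := quadraticChar (ZMod p) with hχ
  have hcast : ∀ x : ZMod p, legendreSym p ((x.val : ℤ)) = χ x := by
    intro x
    simp [legendreSym, hχ, ZMod.natCast_val, ZMod.cast_id]
  have h10 : (1 : ZMod p) ≠ 0 := one_ne_zero
  have hterm : ∀ a : ZMod p, a ≠ 0 → a ≠ 1 →
      χ ((a - 1) * (a⁻¹ - 1)) = χ (-1) * χ a := by
    intro a ha ha1
    have heq : (a - 1) * (a⁻¹ - 1) = (-1) * a * (a⁻¹ * (a - 1)) ^ 2 := by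
      field_simp
      ring
    have hb : a⁻¹ * (a - 1) ≠ 0 := by
      apply mul_ne_zero (inv_ne_zero ha)
      exact sub_ne_zero.mpr ha1
    rw [heq, map_mul, map_mul, mul_assoc]
    rw [quadraticChar_sq_one' hb, mul_one]
  rw [Finset.sum_congr rfl (fun a _ => hcast _)]
  have h1mem : (1 : ZMod p) ∈ univ.filter (fun a : ZMod p => a ≠ 0) := by
    simp [h10]
  rw [← Finset.add_sum_erase _ _ h1mem]
  have : χ ((1 - 1) * ((1 : ZMod p)⁻¹ - 1)) = 0 := by
    simp [hχ]
  rw [this, zero_add]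
  have hrw : ∑ a ∈ (univ.filter (fun a : ZMod p => a ≠ 0)).erase 1,
      χ ((a - 1) * (a⁻¹ - 1)) = ∑ a ∈ (univ.filter (fun a : ZMod p => a ≠ 0)).erase 1,
      χ (-1) * χ a := by
    apply Finset.sum_congr rfl
    intro a ha
    simp only [Finset.mem_erase, Finset.mem_filter] at ha
    exact hterm a ha.2.2 ha.1
  rw [hrw, ← Finset.mul_sum]
  have hsum : ∑ a ∈ (univ.filter (fun a : ZMod p => a ≠ 0)).erase 1, χ a = -1 := by
    have h0 : ∑ a ∈ univ.filter (fun a : ZMod p => a ≠ 0), χ a = ∑ a : ZMod p, χ a := by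
      apply Finset.sum_subset (Finset.filter_subset _ _)
      intro x _ hx
      simp only [Finset.mem_filter, Finset.mem_univ, true_and, not_not] at hx
      simp [hx, hχ]
    have h2 : χ 1 + ∑ a ∈ (univ.filter (fun a : ZMod p => a ≠ 0)).erase 1, χ a
        = ∑ a ∈ univ.filter (fun a : ZMod p => a ≠ 0), χ a :=
      Finset.add_sum_erase _ _ h1mem
    rw [h0, quadraticChar_sum_zero hchar] at h2
    have hχ1 : χ 1 = 1 := map_one χ
    linarith [h2, hχ1.symm ▸ h2]
  rw [hsum]
  have : legendreSym p (-1) = χ (-1) := by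
    simp [legendreSym, hχ]
  rw [this]
  ring
end

section
/- Let p be an odd prime. Then ∑_{u=1}^{p-1} ∑_{a=1}^{p-1} ((u·a - 1)·(u·ā - 1) | p) = 2, where (· | p) is the Legendre symbol and ā is the inverse of a mod p. -/
/-!
Since `a * a⁻¹ = 1`, the summand is `χ ((u - a) * (u - a⁻¹))`. For distinct `a, b` the complete
sum `∑ u, χ ((u - a) * (u - b))` is `-1`, and for `a = b` it is `q - 1`; removing `u = 0` subtracts
`χ (a * a⁻¹) = 1`. The only nonzero `a` with `a = a⁻¹` are `±1`, so the double sum is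
`2 q - 2 (q - 1) = 2`.
-/

open Finset

namespace FiniteField

variable {F : Type*} [Field F] [Fintype F] [DecidableEq F]

lemma sum_quadraticChar_one_add_mul (hF : ringChar F ≠ 2) {d : F} (hd : d ≠ 0) :
    ∑ w : F, quadraticChar F (1 + d * w) = 0 := by
  rw [← quadraticChar_sum_zero hF]
  exact Fintype.sum_equiv ((Equiv.mulLeft₀ d hd).trans (Equiv.addLeft 1)) _ _ fun _ => rfl

/-- Substitute `v = w⁻¹`: then `χ (v * (v + d)) = χ (1 + d * w)` except at `w = 0`. -/
lemma sum_quadraticChar_mul_add (hF : ringChar F ≠ 2) {d : F} (hd : d ≠ 0) :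
    ∑ v : F, quadraticChar F (v * (v + d)) = -1 := by
  have hinv (w : F) : quadraticChar F (w⁻¹ * (w⁻¹ + d)) =
      quadraticChar F (1 + d * w) - if w = 0 then 1 else 0 := by
    rcases eq_or_ne w 0 with rfl | hw
    · simp
    · rw [if_neg hw, sub_zero, show w⁻¹ * (w⁻¹ + d) = w⁻¹ ^ 2 * (1 + d * w) by field_simp,
        map_mul, quadraticChar_sq_one' (inv_ne_zero hw), one_mul]
  rw [← Equiv.sum_comp (Equiv.inv F)]
  simp only [Equiv.inv_apply, hinv, sum_sub_distrib, sum_quadraticChar_one_add_mul hF hd,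
    sum_ite_eq', mem_univ, if_true, zero_sub]

lemma sum_quadraticChar_mul_self :
    ∑ v : F, quadraticChar F (v * v) = Fintype.card F - 1 := by
  have hsq (v : F) : quadraticChar F (v * v) = 1 - if v = 0 then 1 else 0 := by
    rcases eq_or_ne v 0 with rfl | hv
    · simp
    · rw [if_neg hv, sub_zero, ← sq, quadraticChar_sq_one' hv]
  simp only [hsq, sum_sub_distrib, sum_const, card_univ, nsmul_eq_mul, mul_one, sum_ite_eq',
    mem_univ, if_true]

lemma sum_quadraticChar_sub_mul_sub (hF : ringChar F ≠ 2) (a b : F) :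
    ∑ u : F, quadraticChar F ((u - a) * (u - b)) =
      if a = b then (Fintype.card F : ℤ) - 1 else -1 := by
  rw [← Equiv.sum_comp (Equiv.addRight a)]
  split_ifs with hab
  · subst hab
    simpa only [Equiv.coe_addRight, add_sub_cancel_right] using sum_quadraticChar_mul_self
  · simpa only [Equiv.coe_addRight, add_sub_cancel_right, add_sub_assoc]
      using sum_quadraticChar_mul_add hF (sub_ne_zero.mpr hab)

lemma sum_ne_zero_quadraticChar_sub_mul_sub_inv (hF : ringChar F ≠ 2) {a : F} (ha : a ≠ 0) :
    ∑ u ∈ univ.filter (· ≠ 0), quadraticChar F ((u - a) * (u - a⁻¹)) =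
      (if a = a⁻¹ then (Fintype.card F : ℤ) else 0) - 2 := by
  have hzero : quadraticChar F ((0 - a) * (0 - a⁻¹)) = 1 := by
    rw [zero_sub, zero_sub, neg_mul_neg, mul_inv_cancel₀ ha, map_one]
  rw [filter_ne', sum_erase_eq_sub (mem_univ 0), hzero, sum_quadraticChar_sub_mul_sub hF]
  split_ifs <;> ring

lemma card_filter_ne_zero_eq_inv (hF : ringChar F ≠ 2) :
    #(univ.filter fun a : F => a ≠ 0 ∧ a = a⁻¹) = 2 := by
  have hpm : (univ.filter fun a : F => a ≠ 0 ∧ a = a⁻¹) = {1, -1} := by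
    ext a
    simp only [mem_filter, mem_univ, true_and, mem_insert, mem_singleton]
    constructor
    · rintro ⟨ha, hinv⟩
      exact mul_self_eq_one_iff.mp (by nth_rw 2 [hinv]; exact mul_inv_cancel₀ ha)
    · rintro (rfl | rfl) <;> simp
  rw [hpm, card_pair (Ring.neg_one_ne_one_of_char_ne_two hF).symm]

theorem sum_sum_quadraticChar_mul_sub_one_mul_mul_inv_sub_one (hF : ringChar F ≠ 2) :
    ∑ u ∈ univ.filter (· ≠ 0), ∑ a ∈ univ.filter (· ≠ 0),
      quadraticChar F ((u * a - 1) * (u * a⁻¹ - 1)) = 2 := by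
  calc _ = ∑ a ∈ univ.filter (· ≠ 0), ∑ u ∈ univ.filter (· ≠ 0),
        quadraticChar F ((u - a) * (u - a⁻¹)) := by
        rw [sum_comm]
        refine sum_congr rfl fun a ha => sum_congr rfl fun u _ => ?_
        have ha : a ≠ 0 := (mem_filter.mp ha).2
        congr 1
        field_simp
    _ = ∑ a ∈ univ.filter (· ≠ 0), ((if a = a⁻¹ then (Fintype.card F : ℤ) else 0) - 2) :=
        sum_congr rfl fun a ha =>
          sum_ne_zero_quadraticChar_sub_mul_sub_inv hF (mem_filter.mp ha).2
    _ = 2 := by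
        rw [sum_sub_distrib, ← sum_filter, filter_filter, sum_const, sum_const,
          card_filter_ne_zero_eq_inv hF, filter_ne', card_erase_of_mem (mem_univ 0), card_univ,
          nsmul_eq_mul, nsmul_eq_mul, Nat.cast_pred Fintype.card_pos]
        ring

end FiniteField

theorem stmt_7 (p : ℕ) [Fact p.Prime] (hp : Odd p) :
    ∑ u ∈ univ.filter (fun u : ZMod p => u ≠ 0),
      ∑ a ∈ univ.filter (fun a : ZMod p => a ≠ 0),
        legendreSym p (((u * a - 1) * (u * a⁻¹ - 1) : ZMod p).val : ℤ) = 2 := by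
  have hchar : ringChar (ZMod p) ≠ 2 := by
    rw [ZMod.ringChar_zmod_n]
    exact hp.ne_two_of_dvd_nat dvd_rfl
  simp only [legendreSym, Int.cast_natCast, ZMod.natCast_zmod_val]
  exact FiniteField.sum_sum_quadraticChar_mul_sub_one_mul_mul_inv_sub_one hchar
end

section
/- Let p > 3 be a prime, n, k integers coprime to p, and ψ a Dirichlet character mod p with ψ non-principal and ψ² non-principal. Then ∑_{m=1}^{p-1} ψ(m)·|∑_{a=1}^{p-1} χ₀(m·a + n·ā)·e(k·a/p)|² = ψ(-n·k²)·τ(ψ̄²)·(2 + ψ(4)), where τ(χ) = ∑_{a=1}^{p} χ(a)·e(a/p) is the Gauss sum. -/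
open Finset Complex

/-- Gauss sum `τ(f) = ∑_{a mod p} f(a) e^{2πia/p}` associated to `f : ZMod p → ℂ`. -/
noncomputable def gaussSum' (p : ℕ) [NeZero p] (f : ZMod p → ℂ) : ℂ :=
  ∑ a : ZMod p, f a * e p a

/-- The Legendre symbol character mod `p`, with complex values. -/
noncomputable def legChar (p : ℕ) [Fact p.Prime] : DirichletCharacter ℂ p :=
  (quadraticChar (ZMod p)).ringHomComp (Int.castRingHom ℂ)

/-!
For `a ≠ 0` the principal character kills `m * a + n * a⁻¹` exactly when `m = -n / a ^ 2`,
so the inner sum equals `-1 - T m`, where `T m` sums `e(k a)` over the fibre of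
`a ↦ -n / a ^ 2` above `m`. Expanding `|1 + T m|²` and summing against `ψ m` turns every
fibre sum back into a sum over `a`; since the fibre through `a` is `{a, -a}`, everything
reduces to the twisted sums `∑ ψ(-n / a ^ 2) e(c a) = ψ(-n c²) τ(ψ̄²)` for
`c = k, -k, 0, 2k`, the case `c = 0` vanishing because `ψ² ≠ 1`.
-/

lemma Finset.sum_mul_sum_filter_eq {ι κ R : Type*} [CommSemiring R] [Fintype κ] [DecidableEq κ]
    (s : Finset ι) (g : ι → κ) (w : κ → R) (f : ι → R) :
    ∑ m, w m * ∑ a ∈ s with g a = m, f a = ∑ a ∈ s, w (g a) * f a := by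
  rw [← sum_fiberwise s g]
  refine sum_congr rfl fun m _ => ?_
  rw [mul_sum]
  exact sum_congr rfl fun a ha => by rw [(mem_filter.mp ha).2]

section FiniteField

variable {F : Type*} [Field F]

lemma MulChar.one_apply_eq_ite {R : Type*} [CommMonoidWithZero R] [Nontrivial R]
    [DecidableEq F] (x : F) :
    (1 : MulChar F R) x = if x = 0 then 0 else 1 := by
  split_ifs with hx
  · rw [hx, MulChar.map_zero]
  · exact MulChar.one_apply (isUnit_iff_ne_zero.mpr hx)

lemma sum_mulChar_mul_addChar_mul [Fintype F] {R : Type*} [CommRing R] (χ : MulChar F R)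
    (ε : AddChar F R) {c : F} (hc : c ≠ 0) :
    ∑ a, χ a * ε (c * a) = χ c⁻¹ * gaussSum χ ε := by
  rw [← gaussSum_mulShift χ ε (Units.mk0 c hc), ← mul_assoc, ← map_mul, Units.val_mk0,
    inv_mul_cancel₀ hc, MulChar.map_one, one_mul]
  simp only [gaussSum, AddChar.mulShift_apply]

variable [Fintype F] [DecidableEq F]

lemma MulChar.sum_filter_ne_zero_mul {R : Type*} [CommRing R] [Nontrivial R]
    (χ : MulChar F R) (f : F → R) :
    ∑ a ∈ univ.filter (· ≠ 0), χ a * f a = ∑ a, χ a * f a :=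
  sum_filter_of_ne fun a _ h ha => h (by rw [ha, χ.map_zero, zero_mul])

lemma AddChar.sum_filter_ne_zero_mul_left {R : Type*} [CommRing R] [IsDomain R]
    {ε : AddChar F R} (hε : ε.IsPrimitive) {c : F} (hc : c ≠ 0) :
    ∑ a ∈ univ.filter (· ≠ 0), ε (c * a) = -1 := by
  have hsum : ∑ a, ε (c * a) = 0 := by
    simpa [mul_comm, hc] using AddChar.sum_mulShift c hε
  rw [filter_ne', sum_erase_eq_sub (mem_univ 0), hsum, mul_zero, AddChar.map_zero_eq_one,
    zero_sub]

lemma sum_filter_neg_mul_inv_sq_eq {R : Type*} [AddCommMonoid R] (h2 : (2 : F) ≠ 0)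
    {n a : F} (hn : n ≠ 0) (ha : a ≠ 0) (f : F → R) :
    ∑ b ∈ univ.filter (· ≠ 0) with -n * b⁻¹ ^ 2 = -n * a⁻¹ ^ 2, f b = f a + f (-a) := by
  have hfiber : (univ.filter (· ≠ 0)).filter (fun b => -n * b⁻¹ ^ 2 = -n * a⁻¹ ^ 2)
      = {a, -a} := by
    ext b
    simp only [mem_filter, mem_univ, true_and, mem_insert, mem_singleton,
      mul_right_inj' (neg_ne_zero.mpr hn), sq_eq_sq_iff_eq_or_eq_neg, inv_inj, ← inv_neg]
    constructor
    · exact fun h => h.2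
    · rintro (rfl | rfl) <;> simp [ha]
  have ha_ne : a ≠ -a := fun h => ha (by
    simpa [h2] using (show (2 : F) * a = 0 by linear_combination h))
  rw [hfiber, sum_pair ha_ne]

lemma sum_one_apply_mul_add_mul_inv_mul_addChar {R : Type*} [CommRing R] [IsDomain R]
    {ε : AddChar F R} (hε : ε.IsPrimitive) {k : F} (hk : k ≠ 0) (m n : F) :
    ∑ a ∈ univ.filter (· ≠ 0), (1 : MulChar F R) (m * a + n * a⁻¹) * ε (k * a)
      = -1 - ∑ a ∈ univ.filter (· ≠ 0) with -n * a⁻¹ ^ 2 = m, ε (k * a) := by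
  rw [eq_sub_iff_add_eq, ← AddChar.sum_filter_ne_zero_mul_left hε hk,
    sum_filter (p := fun a => -n * a⁻¹ ^ 2 = m), ← sum_add_distrib]
  refine sum_congr rfl fun a ha => ?_
  have hzero : m * a + n * a⁻¹ = 0 ↔ -n * a⁻¹ ^ 2 = m := by
    replace ha : a ≠ 0 := (mem_filter.mp ha).2
    constructor <;> intro h
    · linear_combination (-a⁻¹) * h + m * (mul_inv_cancel₀ ha)
    · linear_combination (-a) * h - n * a⁻¹ * (mul_inv_cancel₀ ha)
  rw [MulChar.one_apply_eq_ite, if_congr hzero rfl rfl]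
  split_ifs <;> simp

lemma sum_mulChar_neg_mul_inv_sq_mul_addChar {R : Type*} [CommRing R] [IsDomain R]
    (ψ : MulChar F R) (hψ : ψ ^ 2 ≠ 1) (ε : AddChar F R) (n c : F) :
    ∑ a ∈ univ.filter (· ≠ 0), ψ (-n * a⁻¹ ^ 2) * ε (c * a)
      = ψ (-n * c ^ 2) * gaussSum (ψ ^ 2)⁻¹ ε := by
  have hinv : ∀ a, ψ a⁻¹ ^ 2 = (ψ ^ 2)⁻¹ a := fun a => by
    rw [MulChar.inv_apply', MulChar.pow_apply' _ two_ne_zero]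
  simp_rw [map_mul ψ (-n), map_pow, hinv, mul_assoc, ← mul_sum,
    MulChar.sum_filter_ne_zero_mul]
  rcases eq_or_ne c 0 with rfl | hc
  · have hχ : (ψ ^ 2)⁻¹ ≠ 1 := inv_ne_one.mpr hψ
    simp [MulChar.sum_eq_zero_of_ne_one hχ, MulChar.map_zero]
  · rw [sum_mulChar_mul_addChar_mul _ _ hc, ← hinv, inv_inv]

lemma norm_sq_sum_one_apply_mul_add_mul_inv_mul_addChar {ε : AddChar F ℂ}
    (hε : ε.IsPrimitive) {k : F} (hk : k ≠ 0) (m n : F) :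
    (‖∑ a ∈ univ.filter (· ≠ 0), (1 : MulChar F ℂ) (m * a + n * a⁻¹) * ε (k * a)‖ : ℂ) ^ 2
      = (1 + ∑ a ∈ univ.filter (· ≠ 0) with -n * a⁻¹ ^ 2 = m, ε (k * a))
        * (1 + ∑ a ∈ univ.filter (· ≠ 0) with -n * a⁻¹ ^ 2 = m, ε (-k * a)) := by
  have hconj : starRingEnd ℂ (∑ a ∈ univ.filter (· ≠ 0) with -n * a⁻¹ ^ 2 = m, ε (k * a))
      = ∑ a ∈ univ.filter (· ≠ 0) with -n * a⁻¹ ^ 2 = m, ε (-k * a) := by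
    simp only [map_sum, ← AddChar.map_neg_eq_conj, neg_mul]
  rw [sum_one_apply_mul_add_mul_inv_mul_addChar hε hk, ← Complex.mul_conj', ← hconj]
  simp only [map_sub, map_neg, map_one]
  ring

theorem sum_mulChar_mul_norm_sq_sum_one_apply_mul_addChar (ψ : MulChar F ℂ)
    (hψ : ψ ^ 2 ≠ 1) {ε : AddChar F ℂ} (hε : ε.IsPrimitive) (h2 : (2 : F) ≠ 0) {n k : F}
    (hn : n ≠ 0) (hk : k ≠ 0) :
    ∑ m ∈ univ.filter (· ≠ 0), ψ m *
      (‖∑ a ∈ univ.filter (· ≠ 0), (1 : MulChar F ℂ) (m * a + n * a⁻¹) * ε (k * a)‖ : ℂ) ^ 2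
      = ψ (-n * k ^ 2) * gaussSum (ψ ^ 2)⁻¹ ε * (2 + ψ 4) := by
  have hfiber : ∀ a ∈ univ.filter (· ≠ 0),
      (∑ b ∈ univ.filter (· ≠ 0) with -n * b⁻¹ ^ 2 = -n * a⁻¹ ^ 2, ε (-k * b)) * ε (k * a)
        = ε (0 * a) + ε (2 * k * a) := fun a ha => by
    rw [sum_filter_neg_mul_inv_sq_eq h2 hn (mem_filter.mp ha).2, add_mul,
      ← AddChar.map_add_eq_mul, ← AddChar.map_add_eq_mul]
    ring_nf
  have hψ1 : ψ ≠ 1 := fun h => hψ (by rw [h, one_pow])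
  simp_rw [norm_sq_sum_one_apply_mul_add_mul_inv_mul_addChar hε hk]
  rw [MulChar.sum_filter_ne_zero_mul]
  calc _ = ∑ m, ψ m
          + ∑ m, ψ m * ∑ a ∈ univ.filter (· ≠ 0) with -n * a⁻¹ ^ 2 = m, ε (k * a)
          + ∑ m, ψ m * ∑ a ∈ univ.filter (· ≠ 0) with -n * a⁻¹ ^ 2 = m, ε (-k * a)
          + ∑ m, (ψ m * ∑ b ∈ univ.filter (· ≠ 0) with -n * b⁻¹ ^ 2 = m, ε (-k * b))
              * ∑ a ∈ univ.filter (· ≠ 0) with -n * a⁻¹ ^ 2 = m, ε (k * a) := by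
        simp only [← sum_add_distrib]
        exact sum_congr rfl fun m _ => by ring
    _ = ∑ a ∈ univ.filter (· ≠ 0), ψ (-n * a⁻¹ ^ 2) * ε (k * a)
          + ∑ a ∈ univ.filter (· ≠ 0), ψ (-n * a⁻¹ ^ 2) * ε (-k * a)
          + ∑ a ∈ univ.filter (· ≠ 0), ψ (-n * a⁻¹ ^ 2) * ε (0 * a)
          + ∑ a ∈ univ.filter (· ≠ 0), ψ (-n * a⁻¹ ^ 2) * ε (2 * k * a) := by
        rw [MulChar.sum_eq_zero_of_ne_one hψ1, zero_add, sum_mul_sum_filter_eq,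
          sum_mul_sum_filter_eq, sum_mul_sum_filter_eq]
        simp only [← sum_add_distrib]
        exact sum_congr rfl fun a ha => by rw [mul_assoc, hfiber a ha]; ring
    _ = ψ (-n * k ^ 2) * gaussSum (ψ ^ 2)⁻¹ ε * (2 + ψ 4) := by
        simp only [sum_mulChar_neg_mul_inv_sq_mul_addChar ψ hψ ε]
        rw [neg_sq, show -n * (2 * k) ^ 2 = 4 * (-n * k ^ 2) by ring, map_mul ψ 4,
          zero_pow two_ne_zero, mul_zero, MulChar.map_zero]
        ring

end FiniteField

lemma e_apply_eq_stdAddChar {p : ℕ} [NeZero p] (x : ZMod p) : e p x = ZMod.stdAddChar x := by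
  rw [ZMod.stdAddChar_apply, ZMod.toCircle_apply, e]

lemma gaussSum'_conj_sq_eq_gaussSum {p : ℕ} [NeZero p] (ψ : MulChar (ZMod p) ℂ) :
    gaussSum' p (fun a => starRingEnd ℂ (ψ a) ^ 2) = gaussSum (ψ ^ 2)⁻¹ ZMod.stdAddChar := by
  refine sum_congr rfl fun a _ => ?_
  rw [e_apply_eq_stdAddChar, ← inv_pow, MulChar.pow_apply' _ two_ne_zero,
    ← MulChar.star_apply', RCLike.star_def]

theorem stmt_10_general (p : ℕ) [Fact p.Prime] (hp : 3 < p) (n k : ℤ)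
    (hn : IsCoprime n (p : ℤ)) (hk : IsCoprime k (p : ℤ))
    (ψ : DirichletCharacter ℂ p) (hψ2 : ψ ^ 2 ≠ 1) :
    ∑ m ∈ univ.filter (fun m : ZMod p => m ≠ 0),
      ψ m * (‖∑ a ∈ univ.filter (fun a : ZMod p => a ≠ 0),
        (1 : DirichletCharacter ℂ p) ((m : ZMod p) * a + (n : ZMod p) * a⁻¹)
          * e p ((k : ZMod p) * a)‖) ^ 2
      = ψ ((-n * k ^ 2 : ℤ) : ZMod p)
          * gaussSum' p (fun a => (starRingEnd ℂ) (ψ a) ^ 2) * (2 + ψ 4) := by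
  have h2 : (2 : ZMod p) ≠ 0 := Ring.two_ne_zero (by rw [ZMod.ringChar_zmod_n]; omega)
  have he : e p = ZMod.stdAddChar := funext e_apply_eq_stdAddChar
  rw [he, gaussSum'_conj_sq_eq_gaussSum, Int.cast_mul, Int.cast_neg, Int.cast_pow]
  exact sum_mulChar_mul_norm_sq_sum_one_apply_mul_addChar ψ hψ2
    (ZMod.isPrimitive_stdAddChar p) h2
    (ZMod.unitOfIsCoprime n hn).ne_zero (ZMod.unitOfIsCoprime k hk).ne_zero

theorem stmt_10 (p : ℕ) [Fact p.Prime] (hp : 3 < p) (n k : ℤ)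
    (hn : IsCoprime n (p : ℤ)) (hk : IsCoprime k (p : ℤ))
    (ψ : DirichletCharacter ℂ p) (hψ : ψ ≠ 1) (hψ2 : ψ ^ 2 ≠ 1) :
    ∑ m ∈ univ.filter (fun m : ZMod p => m ≠ 0),
      ψ m * (‖∑ a ∈ univ.filter (fun a : ZMod p => a ≠ 0),
        (1 : DirichletCharacter ℂ p) ((m : ZMod p) * a + (n : ZMod p) * a⁻¹)
          * e p ((k : ZMod p) * a)‖) ^ 2
      = ψ ((-n * k ^ 2 : ℤ) : ZMod p)
          * gaussSum' p (fun a => (starRingEnd ℂ) (ψ a) ^ 2) * (2 + ψ 4) :=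
  stmt_10_general p hp n k hn hk ψ hψ2
end

section
/- Let p > 3 be a prime and n, k integers coprime to p. Then ∑_{ψ ≠ χ₀} |∑_{m=1}^{p-1} ψ(m)·|∑_{a=1}^{p-1} χ₀(m·a + n·ā)·e(k·a/p)|²|² = 6p² - 31p + 16, where the outer sum is over all non-principal Dirichlet characters ψ mod p. -/
open Finset Complex

/-!
Let `ψ` be a nontrivial additive character of a finite field `F` with `q` elements (here
`ψ(a) = e(ka/p)`), and `W(m) = ∑_{a ≠ 0} χ₀(m a + n a⁻¹) ψ(a)` (`hybridSum`). Since
`m a + n a⁻¹ = 0` exactly when `a² = -n/m`, `W(m) = -1 - T(-n/m)` with `T(c) = ∑_{a² = c} ψ(a)`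
(`sqrtSum`), a real number. Orthogonality turns the sum over multiplicative characters
`χ ≠ χ₀` into `(q - 1) ∑ |W|⁴ - (∑ |W|²)²`, and as `m ↦ -n/m` permutes `F^×` it remains to
compute `∑_{c ≠ 0} (1 + T(c))² = 2q - 5` and `∑_{c ≠ 0} (1 + T(c))⁴ = 10q - 41`. For these,
`∑_{c ≠ 0} T(c) g(T(c)) = ∑_{a ≠ 0} g(T(a²)) ψ(a)` and `T(a²) = z + z⁻¹` with `z = ψ(a)`, which
reduces everything to `∑_{a ≠ 0} ψ(a)^j = -1` for `j ≠ 0` in `F`.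
-/

open ComplexConjugate

lemma natCast_card_filter_ne_zero {α R : Type*} [Fintype α] [DecidableEq α] [Zero α]
    [AddGroupWithOne R] : ((univ.filter (· ≠ (0 : α))).card : R) = Fintype.card α - 1 := by
  rw [filter_ne', card_erase_of_mem (mem_univ 0), card_univ,
    Nat.cast_sub Fintype.card_pos, Nat.cast_one]

lemma sum_ne_zero_neg_div_eq {F M : Type*} [Field F] [Fintype F] [DecidableEq F]
    [AddCommMonoid M] {n : F} (hn : n ≠ 0) (f : F → M) :
    ∑ m ∈ univ.filter (· ≠ 0), f (-n / m) = ∑ c ∈ univ.filter (· ≠ 0), f c := by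
  refine sum_nbij' (fun m => -n / m) (fun c => -n / c) ?_ ?_ ?_ ?_ fun _ _ => rfl <;>
    intro a ha <;> simp only [mem_filter, mem_univ, true_and] at ha ⊢
  · exact div_ne_zero (neg_ne_zero.mpr hn) ha
  · exact div_ne_zero (neg_ne_zero.mpr hn) ha
  · field_simp
  · field_simp

namespace DirichletCharacter

variable {n : ℕ}

lemma conj_apply_of_isUnit (χ : DirichletCharacter ℂ n) {m : ZMod n} (hm : IsUnit m) :
    conj (χ m) = χ m⁻¹ := by
  obtain ⟨u, rfl⟩ := hm
  rw [← RCLike.star_def, MulChar.star_apply', MulChar.inv_apply, Ring.inverse_unit,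
    ZMod.inv_coe_unit]

lemma sum_norm_sq_sum_mul [NeZero n] (s : Finset (ZMod n)) (hs : ∀ m ∈ s, IsUnit m)
    (f : ZMod n → ℂ) :
    ∑ χ : DirichletCharacter ℂ n, ‖∑ m ∈ s, χ m * f m‖ ^ 2
      = n.totient * ∑ m ∈ s, ‖f m‖ ^ 2 := by
  apply Complex.ofReal_injective
  push_cast
  simp only [← mul_conj', map_sum, map_mul]
  simp_rw [sum_mul_sum, mul_sum]
  calc ∑ χ : DirichletCharacter ℂ n, ∑ m ∈ s, ∑ m' ∈ s,
        χ m * f m * (conj (χ m') * conj (f m'))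
      = ∑ m ∈ s, ∑ m' ∈ s,
          (∑ χ : DirichletCharacter ℂ n, χ m'⁻¹ * χ m) * (f m * conj (f m')) := by
        rw [sum_comm]
        refine sum_congr rfl fun m _ => ?_
        rw [sum_comm]
        refine sum_congr rfl fun m' hm' => ?_
        rw [sum_mul]
        refine sum_congr rfl fun χ _ => ?_
        rw [conj_apply_of_isUnit χ (hs m' hm')]
        ring
    _ = ∑ m ∈ s, n.totient * (f m * conj (f m)) := by
        refine sum_congr rfl fun m hm => ?_
        rw [sum_congr rfl fun m' hm' => by rw [sum_char_inv_mul_char_eq ℂ (hs m' hm') m]]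
        simp only [ite_mul, zero_mul, sum_ite_eq', if_pos hm]

lemma sum_ne_one_norm_sq_sum_mul [NeZero n] (s : Finset (ZMod n)) (hs : ∀ m ∈ s, IsUnit m)
    (f : ZMod n → ℝ) :
    ∑ χ ∈ univ.filter (fun χ : DirichletCharacter ℂ n => χ ≠ 1), ‖∑ m ∈ s, χ m * f m‖ ^ 2
      = n.totient * ∑ m ∈ s, f m ^ 2 - (∑ m ∈ s, f m) ^ 2 := by
  have htrivial : ∑ m ∈ s, (1 : DirichletCharacter ℂ n) m * f m = ∑ m ∈ s, f m := by
    push_cast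
    exact sum_congr rfl fun m hm => by rw [MulChar.one_apply (hs m hm), one_mul]
  rw [filter_ne', sum_erase_eq_sub (mem_univ 1), sum_norm_sq_sum_mul s hs, htrivial]
  simp only [norm_real, Real.norm_eq_abs, sq_abs]

end DirichletCharacter

namespace AddChar

variable {F : Type*} [Field F] [Fintype F] [DecidableEq F] {ψ : AddChar F ℂ}

lemma sum_ne_zero_zpow_eq_neg_one (hψ : ψ ≠ 1) {j : ℤ} (hj : (j : F) ≠ 0) :
    ∑ a ∈ univ.filter (· ≠ 0), ψ a ^ j = -1 := by
  have hsum : ∑ a, ψ.mulShift j a = 0 := sum_eq_zero_of_ne_one (IsPrimitive.of_ne_one hψ hj)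
  simp only [mulShift_apply, ← zsmul_eq_mul, map_zsmul_eq_zpow] at hsum
  rw [filter_ne', sum_erase_eq_sub (mem_univ 0), hsum, map_zero_eq_one, one_zpow, zero_sub]

lemma sum_ne_zero_eq_neg_one (hψ : ψ ≠ 1) : ∑ a ∈ univ.filter (· ≠ 0), ψ a = -1 := by
  simpa using sum_ne_zero_zpow_eq_neg_one hψ (j := 1) (by simp)

noncomputable def sqrtSum (ψ : AddChar F ℂ) (c : F) : ℂ :=
  ∑ a ∈ univ.filter (fun a => a * a = c), ψ a

lemma sum_sqrtSum_mul (ψ : AddChar F ℂ) (g : ℂ → ℂ) :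
    ∑ c ∈ univ.filter (· ≠ 0), ψ.sqrtSum c * g (ψ.sqrtSum c)
      = ∑ a ∈ univ.filter (· ≠ 0), g (ψ.sqrtSum (a * a)) * ψ a := by
  have hmaps : ∀ a ∈ univ.filter (· ≠ (0 : F)), a * a ∈ univ.filter (· ≠ (0 : F)) := by
    simp
  rw [← sum_fiberwise_of_maps_to hmaps (f := fun a => g (ψ.sqrtSum (a * a)) * ψ a)]
  refine sum_congr rfl fun c hc => ?_
  have hroots : (univ.filter (· ≠ 0)).filter (fun a => a * a = c)
      = univ.filter (fun a => a * a = c) := by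
    ext a
    simp only [mem_filter, mem_univ, true_and, and_iff_right_iff_imp]
    rintro rfl h
    simp_all
  rw [hroots, sum_congr rfl fun a ha => by rw [(mem_filter.mp ha).2], ← mul_sum, mul_comm]
  rfl

lemma sqrtSum_mul_self (ψ : AddChar F ℂ) (h2 : (2 : F) ≠ 0) {a : F} (ha : a ≠ 0) :
    ψ.sqrtSum (a * a) = ψ a + (ψ a)⁻¹ := by
  have hroots : univ.filter (fun x => x * x = a * a) = {a, -a} := by
    ext x
    simp [mul_self_eq_mul_self_iff]
  have ha' : a ≠ -a := fun h =>
    ha (by simpa [h2] using (show (2 : F) * a = 0 by linear_combination h))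
  rw [sqrtSum, hroots, sum_pair ha', map_neg_eq_inv]

lemma conj_sqrtSum (ψ : AddChar F ℂ) (c : F) : conj (ψ.sqrtSum c) = ψ.sqrtSum c := by
  rw [sqrtSum, map_sum]
  refine sum_equiv (Equiv.neg F) (fun a => by simp) (fun a _ => ?_)
  rw [Equiv.neg_apply, map_neg_eq_conj]

lemma sum_one_add_sqrtSum_sq (hψ : ψ ≠ 1) (h2 : (2 : F) ≠ 0) :
    ∑ c ∈ univ.filter (· ≠ 0), (1 + ψ.sqrtSum c) ^ 2 = 2 * (Fintype.card F : ℂ) - 5 := by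
  have hlaurent : ∀ a ∈ univ.filter (· ≠ (0 : F)),
      (2 + ψ.sqrtSum (a * a)) * ψ a = ψ a ^ (2 : ℤ) + 2 * ψ a ^ (1 : ℤ) + 1 := by
    intro a ha
    have hz : ψ a ≠ 0 := (ψ.val_isUnit a).ne_zero
    rw [sqrtSum_mul_self ψ h2 (mem_filter.mp ha).2]
    field_simp
    ring
  calc ∑ c ∈ univ.filter (· ≠ 0), (1 + ψ.sqrtSum c) ^ 2
      = ∑ c ∈ univ.filter (· ≠ 0), (1 + ψ.sqrtSum c * (2 + ψ.sqrtSum c)) :=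
        sum_congr rfl fun c _ => by ring
    _ = 2 * (Fintype.card F : ℂ) - 5 := by
      rw [sum_add_distrib, sum_sqrtSum_mul ψ (2 + ·), sum_congr rfl hlaurent,
        sum_add_distrib, sum_add_distrib, ← mul_sum,
        sum_ne_zero_zpow_eq_neg_one hψ (by exact_mod_cast h2),
        sum_ne_zero_zpow_eq_neg_one hψ (by simp), sum_const, nsmul_eq_mul,
        natCast_card_filter_ne_zero]
      ring

lemma sum_one_add_sqrtSum_pow_four (hψ : ψ ≠ 1) (h2 : (2 : F) ≠ 0) (h3 : (3 : F) ≠ 0) :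
    ∑ c ∈ univ.filter (· ≠ 0), (1 + ψ.sqrtSum c) ^ 4 = 10 * (Fintype.card F : ℂ) - 41 := by
  have hlaurent : ∀ a ∈ univ.filter (· ≠ (0 : F)),
      (4 + 6 * ψ.sqrtSum (a * a) + 4 * ψ.sqrtSum (a * a) ^ 2 + ψ.sqrtSum (a * a) ^ 3) * ψ a
        = ψ a ^ (4 : ℤ) + 4 * ψ a ^ (3 : ℤ) + 9 * ψ a ^ (2 : ℤ) + 12 * ψ a ^ (1 : ℤ)
          + 4 * ψ a ^ (-1 : ℤ) + ψ a ^ (-2 : ℤ) + 9 := by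
    intro a ha
    have hz : ψ a ≠ 0 := (ψ.val_isUnit a).ne_zero
    rw [sqrtSum_mul_self ψ h2 (mem_filter.mp ha).2]
    field_simp
    ring
  have h4 : ((4 : ℤ) : F) ≠ 0 := by
    rw [show ((4 : ℤ) : F) = 2 * 2 by norm_num]
    exact mul_ne_zero h2 h2
  calc ∑ c ∈ univ.filter (· ≠ 0), (1 + ψ.sqrtSum c) ^ 4
      = ∑ c ∈ univ.filter (· ≠ 0), (1 + ψ.sqrtSum c * (4 + 6 * ψ.sqrtSum c
          + 4 * ψ.sqrtSum c ^ 2 + ψ.sqrtSum c ^ 3)) :=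
        sum_congr rfl fun c _ => by ring
    _ = 10 * (Fintype.card F : ℂ) - 41 := by
      rw [sum_add_distrib, sum_sqrtSum_mul ψ (fun t => 4 + 6 * t + 4 * t ^ 2 + t ^ 3),
        sum_congr rfl hlaurent]
      simp only [sum_add_distrib, ← mul_sum, sum_const, nsmul_eq_mul, natCast_card_filter_ne_zero]
      rw [sum_ne_zero_zpow_eq_neg_one hψ h4,
        sum_ne_zero_zpow_eq_neg_one hψ (by exact_mod_cast h3),
        sum_ne_zero_zpow_eq_neg_one hψ (by exact_mod_cast h2),
        sum_ne_zero_zpow_eq_neg_one hψ (by simp), sum_ne_zero_zpow_eq_neg_one hψ (by simp),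
        sum_ne_zero_zpow_eq_neg_one hψ (by simpa using h2)]
      ring

noncomputable def hybridSum (ψ : AddChar F ℂ) (m n : F) : ℂ :=
  ∑ a ∈ univ.filter (· ≠ 0), (1 : MulChar F ℂ) (m * a + n * a⁻¹) * ψ a

lemma hybridSum_eq_neg_one_sub_sqrtSum (hψ : ψ ≠ 1) {m n : F} (hm : m ≠ 0) (hn : n ≠ 0) :
    ψ.hybridSum m n = -1 - ψ.sqrtSum (-n / m) := by
  have hsummand : ∀ a ∈ univ.filter (· ≠ (0 : F)), (1 : MulChar F ℂ) (m * a + n * a⁻¹) * ψ a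
      = ψ a - if a * a = -n / m then ψ a else 0 := by
    intro a ha
    have ha : a ≠ 0 := (mem_filter.mp ha).2
    have hzero : m * a + n * a⁻¹ = 0 ↔ a * a = -n / m := by
      rw [show m * a + n * a⁻¹ = (a * a * m + n) * a⁻¹ by field_simp, mul_eq_zero,
        or_iff_left (inv_ne_zero ha), eq_div_iff hm, eq_neg_iff_add_eq_zero]
    by_cases h : a * a = -n / m
    · rw [if_pos h, hzero.mpr h, MulChar.map_zero, zero_mul, sub_self]
    · rw [if_neg h, MulChar.one_apply (isUnit_iff_ne_zero.mpr (mt hzero.mp h))]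
      ring
  have hroots : (univ.filter (· ≠ (0 : F))).filter (fun a => a * a = -n / m)
      = univ.filter (fun a => a * a = -n / m) := by
    ext a
    simp only [mem_filter, mem_univ, true_and, and_iff_right_iff_imp]
    intro h ha
    rw [ha, mul_zero] at h
    exact div_ne_zero (neg_ne_zero.mpr hn) hm h.symm
  rw [hybridSum, sum_congr rfl hsummand, sum_sub_distrib, ← sum_filter, hroots,
    sum_ne_zero_eq_neg_one hψ]
  rfl

lemma norm_sq_hybridSum (hψ : ψ ≠ 1) {m n : F} (hm : m ≠ 0) (hn : n ≠ 0) :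
    ((‖ψ.hybridSum m n‖ ^ 2 : ℝ) : ℂ) = (1 + ψ.sqrtSum (-n / m)) ^ 2 := by
  rw [ofReal_pow, ← mul_conj', hybridSum_eq_neg_one_sub_sqrtSum hψ hm hn, map_sub, map_neg,
    map_one, conj_sqrtSum]
  ring

lemma sum_norm_sq_hybridSum (hψ : ψ ≠ 1) (h2 : (2 : F) ≠ 0) {n : F} (hn : n ≠ 0) :
    ∑ m ∈ univ.filter (· ≠ 0), ‖ψ.hybridSum m n‖ ^ 2 = 2 * (Fintype.card F : ℝ) - 5 := by
  apply Complex.ofReal_injective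
  rw [ofReal_sum, sum_congr rfl fun m hm => norm_sq_hybridSum hψ (mem_filter.mp hm).2 hn,
    sum_ne_zero_neg_div_eq hn (fun c => (1 + ψ.sqrtSum c) ^ 2), sum_one_add_sqrtSum_sq hψ h2]
  push_cast
  ring

lemma sum_norm_sq_hybridSum_sq (hψ : ψ ≠ 1) (h2 : (2 : F) ≠ 0) (h3 : (3 : F) ≠ 0) {n : F}
    (hn : n ≠ 0) :
    ∑ m ∈ univ.filter (· ≠ 0), (‖ψ.hybridSum m n‖ ^ 2) ^ 2
      = 10 * (Fintype.card F : ℝ) - 41 := by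
  apply Complex.ofReal_injective
  rw [ofReal_sum, sum_congr rfl fun m hm => by
      rw [ofReal_pow, norm_sq_hybridSum hψ (mem_filter.mp hm).2 hn, ← pow_mul],
    sum_ne_zero_neg_div_eq hn (fun c => (1 + ψ.sqrtSum c) ^ (2 * 2)),
    sum_one_add_sqrtSum_pow_four hψ h2 h3]
  push_cast
  ring

end AddChar

lemma ZMod.natCast_ne_zero_of_pos_of_lt {p j : ℕ} (hj0 : 0 < j) (hjp : j < p) :
    (j : ZMod p) ≠ 0 := fun h =>
  absurd (Nat.le_of_dvd hj0 ((ZMod.natCast_eq_zero_iff j p).mp h)) (by omega)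

theorem stmt_11 (p : ℕ) [Fact p.Prime] (hp : 3 < p) (n k : ℤ)
    (hn : IsCoprime n (p : ℤ)) (hk : IsCoprime k (p : ℤ)) :
    ∑ ψ ∈ univ.filter (fun ψ : DirichletCharacter ℂ p => ψ ≠ 1),
      (‖(∑ m ∈ univ.filter (fun m : ZMod p => m ≠ 0),
        ψ m * (‖(∑ a ∈ univ.filter (fun a : ZMod p => a ≠ 0),
          (1 : DirichletCharacter ℂ p) ((m : ZMod p) * a + (n : ZMod p) * a⁻¹)
            * e p ((k : ZMod p) * a))‖) ^ 2)‖) ^ 2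
      = 6 * p ^ 2 - 31 * p + 16 := by
  set ψ := (ZMod.stdAddChar (N := p)).mulShift k
  have hψ : ψ ≠ 1 := ZMod.isPrimitive_stdAddChar p (ZMod.unitOfIsCoprime k hk).ne_zero
  have hW : ∀ m : ZMod p, ∑ a ∈ univ.filter (fun a : ZMod p => a ≠ 0),
      (1 : DirichletCharacter ℂ p) (m * a + n * a⁻¹) * e p (k * a) = ψ.hybridSum m n :=
    fun m => sum_congr rfl fun a _ => by
      rw [AddChar.mulShift_apply, ZMod.stdAddChar_apply, ZMod.toCircle_apply, e]
  have h2 : (2 : ZMod p) ≠ 0 := by exact_mod_cast ZMod.natCast_ne_zero_of_pos_of_lt two_pos hp.le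
  have h3 : (3 : ZMod p) ≠ 0 := by exact_mod_cast ZMod.natCast_ne_zero_of_pos_of_lt three_pos hp
  have hn' : (n : ZMod p) ≠ 0 := (ZMod.unitOfIsCoprime n hn).ne_zero
  simp only [hW, ← ofReal_pow]
  rw [DirichletCharacter.sum_ne_one_norm_sq_sum_mul _
      (fun m hm => isUnit_iff_ne_zero.mpr (mem_filter.mp hm).2),
    AddChar.sum_norm_sq_hybridSum hψ h2 hn', AddChar.sum_norm_sq_hybridSum_sq hψ h2 h3 hn',
    ZMod.card, Nat.totient_prime Fact.out, Nat.cast_sub (Fact.out : p.Prime).one_le]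
  push_cast
  ring
end

section
/- Let p > 3 be a prime. The number of triples (u,a,b) ∈ (F_p^×)³ such that (u·a-1)(u·b̄-1)(b-1)² ≡ 0 and (u·b-1)(u·ā-1)(a-1)² ≡ 0 mod p equals 9p - 20. -/
/-!
Work over a finite field with `q` elements in which `-1 ≠ 1`. For nonzero `u, a, b` the first
product vanishes iff `a = u⁻¹`, `b = u` or `b = 1`, and the second iff `b = u⁻¹`, `a = u` or
`a = 1`. Count the pairs `(a, b)` fibrewise over `u`: for `u = 1` they are the `2(q - 1) - 1`
pairs with `a = 1` or `b = 1`; for `u = -1` the `2(q - 1) - 1` pairs with `a = -1` or `b = -1`,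
together with `(1, 1)`; for each of the other `q - 3` values of `u` exactly the five pairs
`(u⁻¹, u⁻¹), (u, u), (u, 1), (1, u), (1, 1)`. In total
`(2q - 3) + (2q - 2) + 5(q - 3) = 9q - 20`.
-/

open Finset

lemma card_filter_univ_prod {α β : Type*} [Fintype α] [Fintype β] (P : α × β → Prop)
    [DecidablePred P] : #{x | P x} = ∑ a, #{b | P (a, b)} := by
  simp only [card_filter, Fintype.sum_prod_type]

lemma card_filter_fst_eq_or_snd_eq {α : Type*} [DecidableEq α] {s : Finset α} {c : α}
    (hc : c ∈ s) : #{x ∈ s ×ˢ s | x.1 = c ∨ x.2 = c} = 2 * #s - 1 := by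
  have hunion : {x ∈ s ×ˢ s | x.1 = c ∨ x.2 = c} = {c} ×ˢ s ∪ s ×ˢ {c} := by
    ext ⟨a, b⟩; aesop
  have hinter : {c} ×ˢ s ∩ s ×ˢ {c} = {(c, c)} := by
    ext ⟨a, b⟩; aesop
  have := card_union_add_card_inter ({c} ×ˢ s) (s ×ˢ {c})
  rw [hinter, card_singleton, card_product, card_product, card_singleton] at this
  rw [hunion]
  omega

variable {F : Type*} [Field F]

lemma triple_product_eq_zero_iff {u a b : F} (hu : u ≠ 0) (hb : b ≠ 0) :
    (u * a - 1) * (u * b⁻¹ - 1) * (b - 1) ^ 2 = 0 ↔ a = u⁻¹ ∨ b = u ∨ b = 1 := by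
  rw [mul_eq_zero, mul_eq_zero, pow_eq_zero_iff two_ne_zero, sub_eq_zero, sub_eq_zero,
    sub_eq_zero, mul_inv_eq_one₀ hb, mul_eq_one_iff_inv_eq₀ hu, eq_comm (a := u⁻¹),
    eq_comm (a := u), or_assoc]

variable [Fintype F] [DecidableEq F]

def solutionsAt (u : F) : Finset (F × F) :=
  {x | u ≠ 0 ∧ x.1 ≠ 0 ∧ x.2 ≠ 0 ∧
    (u * x.1 - 1) * (u * x.2⁻¹ - 1) * (x.2 - 1) ^ 2 = 0 ∧
    (u * x.2 - 1) * (u * x.1⁻¹ - 1) * (x.1 - 1) ^ 2 = 0}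

lemma solutionsAt_zero : solutionsAt (0 : F) = ∅ := by
  simp [solutionsAt]

lemma solutionsAt_of_ne_zero {u : F} (hu : u ≠ 0) :
    solutionsAt u = {x ∈ univ.erase (0 : F) ×ˢ univ.erase (0 : F) |
      (x.1 = u⁻¹ ∨ x.2 = u ∨ x.2 = 1) ∧ (x.2 = u⁻¹ ∨ x.1 = u ∨ x.1 = 1)} := by
  ext ⟨a, b⟩
  simp only [solutionsAt, mem_filter, mem_univ, mem_product, mem_erase, true_and, and_true]
  constructor
  · rintro ⟨-, ha, hb, h₁, h₂⟩
    exact ⟨⟨ha, hb⟩, (triple_product_eq_zero_iff hu hb).1 h₁,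
      (triple_product_eq_zero_iff hu ha).1 h₂⟩
  · rintro ⟨⟨ha, hb⟩, h₁, h₂⟩
    exact ⟨hu, ha, hb, (triple_product_eq_zero_iff hu hb).2 h₁,
      (triple_product_eq_zero_iff hu ha).2 h₂⟩

lemma card_solutionsAt_one : #(solutionsAt (1 : F)) = 2 * Fintype.card F - 3 := by
  have h : solutionsAt (1 : F) =
      {x ∈ univ.erase (0 : F) ×ˢ univ.erase (0 : F) | x.1 = 1 ∨ x.2 = 1} := by
    rw [solutionsAt_of_ne_zero one_ne_zero]
    refine filter_congr fun x _ => ?_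
    rw [inv_one]
    tauto
  rw [h, card_filter_fst_eq_or_snd_eq (mem_erase.2 ⟨one_ne_zero, mem_univ _⟩),
    card_erase_of_mem (mem_univ _), card_univ]
  omega

lemma card_solutionsAt_neg_one (hF : ringChar F ≠ 2) :
    #(solutionsAt (-1 : F)) = 2 * Fintype.card F - 2 := by
  have hne : (-1 : F) ≠ 1 := Ring.neg_one_ne_one_of_char_ne_two hF
  have h : solutionsAt (-1 : F) =
      insert (1, 1) {x ∈ univ.erase (0 : F) ×ˢ univ.erase (0 : F) | x.1 = -1 ∨ x.2 = -1} := by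
    rw [solutionsAt_of_ne_zero (neg_ne_zero.2 one_ne_zero), inv_neg, inv_one]
    ext ⟨a, b⟩
    simp only [mem_filter, mem_insert, mem_product, mem_erase, mem_univ, and_true, Prod.mk.injEq]
    constructor
    · tauto
    · rintro (⟨rfl, rfl⟩ | h)
      · simp
      · tauto
  have h1 : ((1 : F), (1 : F)) ∉
      {x ∈ univ.erase (0 : F) ×ˢ univ.erase (0 : F) | x.1 = -1 ∨ x.2 = -1} := by
    simp [hne.symm]
  rw [h, card_insert_of_notMem h1, card_filter_fst_eq_or_snd_eq
    (mem_erase.2 ⟨neg_ne_zero.2 one_ne_zero, mem_univ _⟩), card_erase_of_mem (mem_univ _),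
    card_univ]
  have := Fintype.one_lt_card (α := F)
  omega

lemma card_solutionsAt {u : F} (hu : u ≠ 0) (hu₁ : u ≠ 1) (hu₂ : u ≠ -1) :
    #(solutionsAt u) = 5 := by
  have hinv₁ : u⁻¹ ≠ 1 := inv_ne_one.2 hu₁
  have hinv : u⁻¹ ≠ u := by
    rw [Ne, inv_eq_self₀]
    tauto
  have h : solutionsAt u = {(u⁻¹, u⁻¹), (u, u), (u, 1), (1, u), (1, 1)} := by
    rw [solutionsAt_of_ne_zero hu]
    ext ⟨a, b⟩
    simp only [mem_filter, mem_insert, mem_singleton, mem_product, mem_erase, mem_univ,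
      Prod.mk.injEq, and_true]
    grind
  rw [h]
  simp [hinv, hinv₁, hu₁, hu₁.symm]

theorem card_solutions (hF : ringChar F ≠ 2) :
    (#{x : F × F × F | x.1 ≠ 0 ∧ x.2.1 ≠ 0 ∧ x.2.2 ≠ 0 ∧
        (x.1 * x.2.1 - 1) * (x.1 * x.2.2⁻¹ - 1) * (x.2.2 - 1) ^ 2 = 0 ∧
        (x.1 * x.2.2 - 1) * (x.1 * x.2.1⁻¹ - 1) * (x.2.1 - 1) ^ 2 = 0} : ℤ)
      = 9 * Fintype.card F - 20 := by
  have hne : (-1 : F) ≠ 1 := Ring.neg_one_ne_one_of_char_ne_two hF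
  have hS : #({0, 1, -1} : Finset F) = 3 :=
    card_eq_three.2 ⟨0, 1, -1, zero_ne_one, (neg_ne_zero.2 one_ne_zero).symm, hne.symm, rfl⟩
  have hrest : ∀ u ∈ ({0, 1, -1} : Finset F)ᶜ, #(solutionsAt u) = 5 := by
    intro u hu
    simp only [mem_compl, mem_insert, mem_singleton, not_or] at hu
    exact card_solutionsAt hu.1 hu.2.1 hu.2.2
  rw [card_filter_univ_prod]
  change ((∑ u : F, #(solutionsAt u) : ℕ) : ℤ) = _
  rw [← sum_add_sum_compl {0, 1, -1}, sum_congr rfl hrest, sum_const, card_compl, hS,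
    sum_insert (by simp), sum_pair hne.symm, solutionsAt_zero, card_empty,
    card_solutionsAt_one, card_solutionsAt_neg_one hF, smul_eq_mul]
  have := hS ▸ card_le_univ ({0, 1, -1} : Finset F)
  omega

theorem stmt_16 (p : ℕ) [Fact p.Prime] (hp : 3 < p) :
    ((univ.filter (fun x : ZMod p × ZMod p × ZMod p =>
        x.1 ≠ 0 ∧ x.2.1 ≠ 0 ∧ x.2.2 ≠ 0 ∧
        (x.1 * x.2.1 - 1) * (x.1 * x.2.2⁻¹ - 1) * (x.2.2 - 1) ^ 2 = 0 ∧
        (x.1 * x.2.2 - 1) * (x.1 * x.2.1⁻¹ - 1) * (x.2.1 - 1) ^ 2 = 0)).card : ℤ)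
      = 9 * p - 20 := by
  simpa [ZMod.card] using card_solutions (F := ZMod p) (by rw [ZMod.ringChar_zmod_n]; omega)
end
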